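/- arXiv:1001.2004 — 6 statements merged into one kernel-verified Lean document; each statement's English description precedes it below -/
import Mathlib

section
/- Let m, f : ℝ² → ℝ be smooth functions and let L and G be LPDOs on ℝ² with smooth coefficients such that A := L ∘ (D_y + f) = (D_x + m) ∘ G as operators on smooth functions (two factorizations of the same operator A into two factors, where the right factor of the first and the left factor of the second have coprime symbols Y and X). Then there exists an LPDO N with smooth coefficients such that L = (D_x + m) ∘ N, and hence A = (D_x + m) ∘ N ∘ (D_y + f) is a factorization of A into three factors whose left factor is D_x + m and whose right factor is D_y + f. -/
/-- The partial derivative operator `D_x` acting on functions of two real variables. -/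
noncomputable def Dx (u : ℝ × ℝ → ℝ) : ℝ × ℝ → ℝ := fun p => fderiv ℝ u p (1, 0)

/-- The partial derivative operator `D_y` acting on functions of two real variables. -/
noncomputable def Dy (u : ℝ × ℝ → ℝ) : ℝ × ℝ → ℝ := fun p => fderiv ℝ u p (0, 1)

/-- A linear partial differential operator on `ℝ²`: a finitely supported family of
smooth coefficients `a_{ij} : ℝ² → ℝ`. -/
structure LPDO2 where
  coeff : ℕ × ℕ → ℝ × ℝ → ℝ
  finite_support : {ij : ℕ × ℕ | coeff ij ≠ 0}.Finite
  smooth_coeff : ∀ ij : ℕ × ℕ, ContDiff ℝ (⊤ : ℕ∞) (coeff ij)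

/-- The action of an LPDO on a function: `Σ_{ij} a_{ij} ∂_x^i ∂_y^j u`. -/
noncomputable def LPDO2.apply (L : LPDO2) (u : ℝ × ℝ → ℝ) : ℝ × ℝ → ℝ :=
  fun p => ∑ᶠ ij : ℕ × ℕ, L.coeff ij p * (Dx^[ij.1] (Dy^[ij.2] u)) p

abbrev SM (u : ℝ × ℝ → ℝ) : Prop := ContDiff ℝ (⊤ : ℕ∞) u

lemma SM.dx {u} (hu : SM u) : SM (Dx u) := (hu.fderiv_right (by simp)).clm_apply contDiff_const
lemma SM.dy {u} (hu : SM u) : SM (Dy u) := (hu.fderiv_right (by simp)).clm_apply contDiff_const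
lemma SM.iterDx {u} (hu : SM u) (i : ℕ) : SM (Dx^[i] u) := by
  induction i with
  | zero => exact hu
  | succ n ih => rw [Function.iterate_succ_apply']; exact ih.dx
lemma SM.iterDy {u} (hu : SM u) (j : ℕ) : SM (Dy^[j] u) := by
  induction j with
  | zero => exact hu
  | succ n ih => rw [Function.iterate_succ_apply']; exact ih.dy
lemma SM.diffAt {u} (hu : SM u) (p : ℝ × ℝ) : DifferentiableAt ℝ u p :=
  (hu.differentiable (by simp)).differentiableAt

lemma dx_add {u v} (hu : SM u) (hv : SM v) :
    Dx (fun q => u q + v q) = fun q => Dx u q + Dx v q := by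
  funext q; simp [Dx, fderiv_fun_add (hu.diffAt q) (hv.diffAt q)]
lemma dy_add {u v} (hu : SM u) (hv : SM v) :
    Dy (fun q => u q + v q) = fun q => Dy u q + Dy v q := by
  funext q; simp [Dy, fderiv_fun_add (hu.diffAt q) (hv.diffAt q)]
lemma dx_mul {u v} (hu : SM u) (hv : SM v) :
    Dx (fun q => u q * v q) = fun q => Dx u q * v q + u q * Dx v q := by
  funext q; simp [Dx, fderiv_fun_mul (hu.diffAt q) (hv.diffAt q)]; ring
lemma dy_mul {u v} (hu : SM u) (hv : SM v) :
    Dy (fun q => u q * v q) = fun q => Dy u q * v q + u q * Dy v q := by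
  funext q; simp [Dy, fderiv_fun_mul (hu.diffAt q) (hv.diffAt q)]; ring
lemma dx_zero : Dx (fun _ => (0:ℝ)) = fun _ => 0 := by
  funext q; simp [Dx]
lemma dy_zero : Dy (fun _ => (0:ℝ)) = fun _ => 0 := by
  funext q; simp [Dy]
lemma dx_sub {u v} (hu : SM u) (hv : SM v) :
    Dx (fun q => u q - v q) = fun q => Dx u q - Dx v q := by
  funext q; simp [Dx, fderiv_fun_sub (hu.diffAt q) (hv.diffAt q)]
lemma dx_const_mul {u} (hu : SM u) (c : ℝ) :
    Dx (fun q => c * u q) = fun q => c * Dx u q := by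
  funext q; simp [Dx, fderiv_const_mul (hu.diffAt q)]
lemma dx_sum {ι : Type*} (s : Finset ι) (F : ι → ℝ × ℝ → ℝ) (hF : ∀ i ∈ s, SM (F i)) :
    Dx (fun q => ∑ i ∈ s, F i q) = fun q => ∑ i ∈ s, Dx (F i) q := by
  funext q
  simp only [Dx]
  rw [fderiv_fun_sum (fun i hi => (hF i hi).diffAt q)]
  simp
lemma sm_sum {ι : Type*} (s : Finset ι) (F : ι → ℝ × ℝ → ℝ) (hF : ∀ i ∈ s, SM (F i)) :
    SM (fun q => ∑ i ∈ s, F i q) := by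
  classical
  induction s using Finset.induction with
  | empty => simpa using contDiff_const
  | @insert a s ha ih =>
    simp only [Finset.sum_insert ha]
    exact (hF a (Finset.mem_insert_self a s)).add (ih (fun i hi => hF i (Finset.mem_insert_of_mem hi)))

-- snd composition
lemma sm_comp_snd {g : ℝ → ℝ} (hg : ContDiff ℝ (⊤ : ℕ∞) g) : SM (fun q : ℝ × ℝ => g q.2) :=
  hg.comp contDiff_snd

lemma dy_comp_snd {g : ℝ → ℝ} (hg : ContDiff ℝ (⊤ : ℕ∞) g) :
    Dy (fun q : ℝ × ℝ => g q.2) = fun q => deriv g q.2 := by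
  funext q
  have h1 : HasFDerivAt (fun q : ℝ × ℝ => g q.2)
      (((1:ℝ →L[ℝ] ℝ).smulRight (deriv g q.2)).comp (ContinuousLinearMap.snd ℝ ℝ ℝ)) q := by
    exact (((hg.differentiable (by simp) q.2).hasDerivAt).hasFDerivAt).comp q
      (hasFDerivAt_snd)
  simp [Dy, h1.fderiv]

lemma dx_comp_snd {g : ℝ → ℝ} (hg : ContDiff ℝ (⊤ : ℕ∞) g) :
    Dx (fun q : ℝ × ℝ => g q.2) = fun _ => 0 := by
  funext q
  have h1 : HasFDerivAt (fun q : ℝ × ℝ => g q.2)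
      (((1:ℝ →L[ℝ] ℝ).smulRight (deriv g q.2)).comp (ContinuousLinearMap.snd ℝ ℝ ℝ)) q :=
    (((hg.differentiable (by simp) q.2).hasDerivAt).hasFDerivAt).comp q (hasFDerivAt_snd)
  simp [Dx, h1.fderiv]

-- exponential E t q = exp (t * (q.1 - c))
noncomputable def Ee (t c : ℝ) : ℝ × ℝ → ℝ := fun q => Real.exp (t * (q.1 - c))

lemma sm_Ee (t c : ℝ) : SM (Ee t c) := by
  unfold Ee
  exact Real.contDiff_exp.comp ((contDiff_const.mul (contDiff_fst.sub contDiff_const)))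

lemma hasFDerivAt_Ee (t c : ℝ) (q : ℝ × ℝ) :
    HasFDerivAt (Ee t c)
      ((t * Real.exp (t * (q.1 - c))) • (ContinuousLinearMap.fst ℝ ℝ ℝ)) q := by
  have h1 : HasFDerivAt (fun q : ℝ × ℝ => t * (q.1 - c))
      (t • (ContinuousLinearMap.fst ℝ ℝ ℝ)) q := by
    simpa using ((hasFDerivAt_fst (𝕜 := ℝ) (p := q)).sub_const c).const_mul t
  have := (Real.hasDerivAt_exp (t * (q.1 - c))).hasFDerivAt.comp q h1
  refine this.congr_fderiv ?_
  ext <;> simp [mul_comm]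

lemma dx_Ee (t c : ℝ) : Dx (Ee t c) = fun q => t * Ee t c q := by
  funext q; simp [Dx, (hasFDerivAt_Ee t c q).fderiv, Ee]

lemma dy_Ee (t c : ℝ) : Dy (Ee t c) = fun _ => 0 := by
  funext q; simp [Dy, (hasFDerivAt_Ee t c q).fderiv]

-- iterated Dy additivity
lemma iterDy_add {u v} (hu : SM u) (hv : SM v) (j : ℕ) :
    Dy^[j] (fun q => u q + v q) = fun q => Dy^[j] u q + Dy^[j] v q := by
  induction j generalizing u v with
  | zero => simp
  | succ n ih =>
    rw [Function.iterate_succ_apply, Function.iterate_succ_apply,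
      Function.iterate_succ_apply, dy_add hu hv]
    exact ih hu.dy hv.dy

-- Dy^[j] (E * W) = E * Dy^[j] W   (E depends only on x)
lemma iterDy_Ee_mul {W} (hW : SM W) (t c : ℝ) (j : ℕ) :
    Dy^[j] (fun q => Ee t c q * W q) = fun q => Ee t c q * Dy^[j] W q := by
  induction j generalizing W with
  | zero => simp
  | succ n ih =>
    rw [Function.iterate_succ_apply, dy_mul (sm_Ee t c) hW, dy_Ee]
    have : (fun q => (0:ℝ) * W q + Ee t c q * Dy W q) = fun q => Ee t c q * Dy W q := by
      funext q; ring
    rw [this, ih hW.dy, Function.iterate_succ_apply]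

-- Dx^[i] (E * W) = E * t^i * W  when Dx W = 0
lemma iterDx_Ee_mul_xconst {W} (hW : SM W) (hWx : Dx W = fun _ => 0) (t c : ℝ) (i : ℕ) :
    Dx^[i] (fun q => Ee t c q * W q) = fun q => t ^ i * (Ee t c q * W q) := by
  induction i with
  | zero => simp
  | succ n ih =>
    rw [Function.iterate_succ_apply', ih]
    have h1 : SM (fun q => Ee t c q * W q) := (sm_Ee t c).mul hW
    rw [dx_const_mul h1, dx_mul (sm_Ee t c) hW, dx_Ee, hWx]
    funext q; ring

-- binomial expansion: Dx^[i] (E * W) = E * Σ_{k≤i} C(i,k) t^k Dx^[i-k] W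
lemma iterDx_Ee_mul {W} (hW : SM W) (t c : ℝ) (i : ℕ) :
    Dx^[i] (fun q => Ee t c q * W q)
      = fun q => Ee t c q * ∑ k ∈ Finset.range (i+1), (i.choose k : ℝ) * t ^ k * Dx^[i-k] W q := by
  induction i with
  | zero => simp
  | succ n ih =>
    rw [Function.iterate_succ_apply', ih]
    have hsm : ∀ k ∈ Finset.range (n+1), SM (fun q => (n.choose k : ℝ) * t ^ k * Dx^[n-k] W q) :=
      fun k _ => contDiff_const.mul (hW.iterDx (n-k))
    have hsum : SM (fun q => ∑ k ∈ Finset.range (n+1), (n.choose k : ℝ) * t ^ k * Dx^[n-k] W q) :=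
      sm_sum _ _ hsm
    rw [dx_mul (sm_Ee t c) hsum, dx_Ee, dx_sum _ _ hsm]
    funext q
    have hterm : ∀ k ∈ Finset.range (n+1),
        Dx (fun q => (n.choose k : ℝ) * t ^ k * Dx^[n-k] W q) q
          = (n.choose k : ℝ) * t ^ k * Dx^[n-k+1] W q := by
      intro k hk
      rw [dx_const_mul (hW.iterDx (n-k))]
      simp [Function.iterate_succ_apply']
    have hs2 : ∑ i ∈ Finset.range (n+1), Dx (fun q => (n.choose i : ℝ) * t ^ i * Dx^[n-i] W q) q
        = ∑ k ∈ Finset.range (n+1), (n.choose k : ℝ) * t ^ k * Dx^[n-k+1] W q :=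
      Finset.sum_congr rfl hterm
    simp only [hs2]
    -- now pure algebra with Pascal
    have key : t * ∑ k ∈ Finset.range (n+1), (n.choose k : ℝ) * t ^ k * Dx^[n-k] W q
        + ∑ k ∈ Finset.range (n+1), (n.choose k : ℝ) * t ^ k * Dx^[n-k+1] W q
        = ∑ k ∈ Finset.range (n+2), ((n+1).choose k : ℝ) * t ^ k * Dx^[n+1-k] W q := by
      have e1 : t * ∑ k ∈ Finset.range (n+1), (n.choose k : ℝ) * t ^ k * Dx^[n-k] W q
          = ∑ k ∈ Finset.range (n+1), (n.choose k : ℝ) * t ^ (k+1) * Dx^[n-k] W q := by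
        rw [Finset.mul_sum]; apply Finset.sum_congr rfl; intro k _; ring
      rw [e1]
      -- reindex first sum: k+1 ↦ k
      have e2 : ∑ k ∈ Finset.range (n+1), (n.choose k : ℝ) * t ^ (k+1) * Dx^[n-k] W q
          = ∑ k ∈ Finset.range (n+2), (if k = 0 then 0 else (n.choose (k-1) : ℝ) * t ^ k * Dx^[n-(k-1)] W q) := by
        rw [Finset.sum_range_succ' (fun k => (if k = 0 then 0 else (n.choose (k-1) : ℝ) * t ^ k * Dx^[n-(k-1)] W q)) (n+1)]
        simp
      have e3 : ∑ k ∈ Finset.range (n+1), (n.choose k : ℝ) * t ^ k * Dx^[n-k+1] W q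
          = ∑ k ∈ Finset.range (n+2), (if k = n+1 then 0 else (n.choose k : ℝ) * t ^ k * Dx^[n-k+1] W q) := by
        rw [Finset.sum_range_succ (fun k => (if k = n+1 then (0:ℝ) else (n.choose k : ℝ) * t ^ k * Dx^[n-k+1] W q)) (n+1)]
        rw [if_pos rfl, add_zero]
        apply Finset.sum_congr rfl
        intro k hk
        simp only [Finset.mem_range] at hk
        rw [if_neg (by omega)]
      rw [e2, e3, ← Finset.sum_add_distrib]
      apply Finset.sum_congr rfl
      intro k hk
      simp only [Finset.mem_range] at hk
      by_cases h0 : k = 0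
      · subst h0; simp
      · by_cases hn : k = n+1
        · subst hn
          simp [Nat.choose_self, Nat.sub_self]
        · rw [if_neg h0, if_neg hn]
          have hk' : k ≤ n := by omega
          have hch : ((n+1).choose k : ℝ) = (n.choose (k-1) : ℝ) + (n.choose k : ℝ) := by
            have : (n+1).choose k = n.choose (k-1) + n.choose k := by
              cases k with
              | zero => omega
              | succ k' => simp [Nat.succ_sub_one, Nat.choose_succ_succ, Nat.add_comm]
            exact_mod_cast congrArg (Nat.cast : ℕ → ℝ) this
          have hidx1 : n - (k-1) = n + 1 - k := by omega
          have hidx2 : n - k + 1 = n + 1 - k := by omega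
          rw [hch, hidx1, hidx2]
          ring
    rw [← key]
    ring

-- iterated deriv of (y-c)^n
lemma iterDeriv_pow' (C c : ℝ) (n : ℕ) : ∀ j : ℕ,
    deriv^[j] (fun y : ℝ => C * (y - c) ^ n) = fun y => C * (n.descFactorial j : ℝ) * (y - c) ^ (n - j) := by
  intro j
  induction j generalizing C n with
  | zero => simp
  | succ k ih =>
    rw [Function.iterate_succ_apply]
    have hd : deriv (fun y : ℝ => C * (y - c) ^ n) = fun y => (C * n) * (y - c) ^ (n - 1) := by
      funext y
      have h1 : HasDerivAt (fun y : ℝ => (y - c) ^ n) ((n:ℝ) * (y - c) ^ (n-1) * 1) y :=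
        ((hasDerivAt_id y).sub_const c).pow n
      have h2 : HasDerivAt (fun y : ℝ => C * (y - c) ^ n) (C * ((n:ℝ) * (y - c) ^ (n-1) * 1)) y :=
        h1.const_mul C
      rw [h2.deriv]; ring
    rw [hd, ih]
    funext y
    rcases Nat.eq_zero_or_pos n with hn | hn
    · subst hn; simp
    · have h3 : n.descFactorial (k+1) = n * (n-1).descFactorial k := by
        have h5 := Nat.succ_descFactorial_succ (n-1) k
        have h6 : n - 1 + 1 = n := by omega
        rw [h6] at h5
        exact h5
      have h4 : n - 1 - k = n - (k+1) := by omega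
      rw [h4]
      push_cast [h3]
      ring

lemma sm_pow_snd (C c : ℝ) (n : ℕ) : SM (fun q : ℝ × ℝ => C * (q.2 - c) ^ n) :=
  contDiff_const.mul ((contDiff_snd.sub contDiff_const).pow n)

-- iterated Dy of g ∘ snd
lemma sm_deriv {g : ℝ → ℝ} (hg : ContDiff ℝ (⊤ : ℕ∞) g) : ContDiff ℝ (⊤ : ℕ∞) (deriv g) := by
  have h : deriv g = fun y => fderiv ℝ g y 1 := by
    funext y; rw [fderiv_apply_one_eq_deriv]
  rw [h]
  exact (hg.fderiv_right (by simp)).clm_apply contDiff_const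

lemma iterDy_comp_snd {g : ℝ → ℝ} (hg : ContDiff ℝ (⊤ : ℕ∞) g) (j : ℕ) :
    Dy^[j] (fun q : ℝ × ℝ => g q.2) = fun q => deriv^[j] g q.2 := by
  induction j generalizing g with
  | zero => simp
  | succ n ih =>
    rw [Function.iterate_succ_apply, dy_comp_snd hg, ih (sm_deriv hg),
      Function.iterate_succ_apply]

-- vanishing lemma: Dy^[j] (F * (y-c)^n) vanishes on y = c for j < n
lemma iterDy_mul_pow_vanish (c : ℝ) : ∀ j : ℕ, ∀ n : ℕ, ∀ F : ℝ × ℝ → ℝ, SM F → j < n →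
    ∀ x : ℝ, Dy^[j] (fun q => F q * (q.2 - c) ^ n) (x, c) = 0 := by
  intro j
  induction j with
  | zero =>
    intro n F hF hn x
    simp [zero_pow (by omega : n ≠ 0)]
  | succ k ih =>
    intro n F hF hn x
    have hpow : SM (fun q : ℝ × ℝ => (q.2 - c) ^ n) := by
      simpa using sm_pow_snd 1 c n
    rw [Function.iterate_succ_apply, dy_mul hF hpow]
    have hdypow : Dy (fun q : ℝ × ℝ => (q.2 - c) ^ n) = fun q => (n:ℝ) * (q.2 - c) ^ (n-1) := by
      have := dy_comp_snd (g := fun y => (y - c) ^ n) (by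
        simpa using ((contDiff_id (E := ℝ)).sub contDiff_const).pow n)
      rw [this]
      funext q
      have h1 : HasDerivAt (fun y : ℝ => (y - c) ^ n) ((n:ℝ) * (q.2 - c) ^ (n-1) * 1) q.2 :=
        ((hasDerivAt_id q.2).sub_const c).pow n
      rw [h1.deriv]; ring
    have heq2 : (fun q => Dy F q * (q.2 - c) ^ n + F q * Dy (fun q : ℝ × ℝ => (q.2 - c) ^ n) q)
        = fun q => (Dy F q * (q.2 - c) ^ n) + ((F q * n) * (q.2 - c) ^ (n-1)) := by
      funext q; rw [hdypow]; ring
    rw [heq2]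
    rw [iterDy_add (hF.dy.mul hpow) ((hF.mul contDiff_const).mul
      (by simpa using sm_pow_snd 1 c (n-1)))]
    have h1 := ih n (fun q => Dy F q) hF.dy (by omega) x
    have h2 := ih (n-1) (fun q => F q * n) (hF.mul contDiff_const) (by omega) x
    simp only at h1 h2 ⊢
    rw [h1, h2, add_zero]

-- polynomial coefficient extraction
lemma poly_coeff_zero (M : ℕ) (b : ℕ → ℝ) (h : ∀ t : ℝ, ∑ k ∈ Finset.range M, b k * t ^ k = 0) :
    ∀ k, k < M → b k = 0 := by
  intro k hk
  have hp : (∑ j ∈ Finset.range M, Polynomial.monomial j (b j)) = (0 : Polynomial ℝ) := by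
    apply Polynomial.funext
    intro t
    simp only [Polynomial.eval_finset_sum, Polynomial.eval_monomial, Polynomial.eval_zero]
    simpa [mul_comm] using h t
  have := congrArg (fun p : Polynomial ℝ => p.coeff k) hp
  simp only [Polynomial.finset_sum_coeff, Polynomial.coeff_monomial, Polynomial.coeff_zero] at this
  rwa [Finset.sum_ite_eq' (Finset.range M) k b, if_pos (Finset.mem_range.mpr hk)] at this

lemma LPDO2.apply_eq_sum (L : LPDO2) (u : ℝ × ℝ → ℝ) (s : Finset (ℕ × ℕ))
    (hs : ∀ ij : ℕ × ℕ, ij ∉ s → L.coeff ij = 0) :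
    L.apply u = fun p => ∑ ij ∈ s, L.coeff ij p * (Dx^[ij.1] (Dy^[ij.2] u)) p := by
  funext p
  apply finsum_eq_finset_sum_of_support_subset
  intro ij hij
  simp only [Function.mem_support] at hij
  by_contra hmem
  rw [hs ij hmem] at hij
  simp at hij

lemma SM.iterDxDy {u} (hu : SM u) (i j : ℕ) : SM (Dx^[i] (Dy^[j] u)) :=
  (hu.iterDy j).iterDx i

lemma LPDO2.sm_apply (L : LPDO2) {u : ℝ × ℝ → ℝ} (hu : SM u) : SM (L.apply u) := by
  classical
  rw [L.apply_eq_sum u L.finite_support.toFinset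
    (fun ij hij => by simpa [Set.Finite.mem_toFinset] using hij)]
  exact sm_sum _ _ (fun ij _ => (L.smooth_coeff ij).mul (hu.iterDxDy ij.1 ij.2))

-- ### Division by (Dx + m) on the left
noncomputable def PmF (m : ℝ × ℝ → ℝ) (g : ℝ × ℝ → ℝ) : ℝ × ℝ → ℝ :=
  fun q => Dx g q + m q * g q

lemma sm_PmF {m g} (hm : SM m) (hg : SM g) : SM (PmF m g) := (hg.dx).add (hm.mul hg)

lemma PmF_zero (m : ℝ × ℝ → ℝ) : PmF m (fun _ => 0) = fun _ => 0 := by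
  funext q; simp [PmF, dx_zero]

lemma sm_iterPmF {m g} (hm : SM m) (hg : SM g) (k : ℕ) : SM ((PmF m)^[k] g) := by
  induction k generalizing g with
  | zero => exact hg
  | succ n ih => rw [Function.iterate_succ_apply]; exact ih (sm_PmF hm hg)

lemma iterPmF_zero (m : ℝ × ℝ → ℝ) (k : ℕ) : (PmF m)^[k] (fun _ => 0) = fun _ => 0 := by
  induction k with
  | zero => rfl
  | succ n ih => rw [Function.iterate_succ_apply, PmF_zero]; exact ih

lemma PmF_sum {m : ℝ × ℝ → ℝ} (hm : SM m) {ι : Type*} (s : Finset ι) (F : ι → ℝ × ℝ → ℝ)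
    (hF : ∀ i ∈ s, SM (F i)) :
    PmF m (fun q => ∑ i ∈ s, F i q) = fun q => ∑ i ∈ s, PmF m (F i) q := by
  funext q
  simp only [PmF, dx_sum s F hF, Finset.mul_sum, ← Finset.sum_add_distrib]

lemma PmF_const_mul {m g} (hm : SM m) (hg : SM g) (c : ℝ) :
    PmF m (fun q => c * g q) = fun q => c * PmF m g q := by
  funext q
  simp only [PmF, dx_const_mul hg]
  ring

noncomputable def I0 (L : LPDO2) : ℕ := L.finite_support.toFinset.sup Prod.fst
noncomputable def J0 (L : LPDO2) : ℕ := L.finite_support.toFinset.sup Prod.snd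

lemma coeff_zero_of_gt (L : LPDO2) {i j : ℕ} (h : I0 L < i ∨ J0 L < j) :
    L.coeff (i, j) = 0 := by
  by_contra hne
  have hmem : (i, j) ∈ L.finite_support.toFinset := by
    simp [Set.Finite.mem_toFinset, Set.mem_setOf_eq, hne]
  rcases h with h | h
  · exact absurd (Finset.le_sup (f := Prod.fst) hmem) (by simpa [I0, J0] using Nat.not_le.mpr h)
  · exact absurd (Finset.le_sup (f := Prod.snd) hmem) (by simpa [I0, J0] using Nat.not_le.mpr h)

noncomputable def ndef (m : ℝ × ℝ → ℝ) (L : LPDO2) (i j : ℕ) : ℝ × ℝ → ℝ :=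
  fun q => ∑ k ∈ Finset.range (I0 L + 1), (-1 : ℝ) ^ k * (PmF m)^[k] (L.coeff (i+1+k, j)) q

lemma sm_ndef {m} (hm : SM m) (L : LPDO2) (i j : ℕ) : SM (ndef m L i j) :=
  sm_sum _ _ (fun k _ => contDiff_const.mul (sm_iterPmF hm (L.smooth_coeff _) k))

lemma ndef_zero_of_ge {m} (L : LPDO2) {i j : ℕ} (h : I0 L ≤ i ∨ J0 L < j) :
    ndef m L i j = fun _ => 0 := by
  funext q
  unfold ndef
  apply Finset.sum_eq_zero
  intro k _
  have hz : L.coeff (i+1+k, j) = 0 := by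
    apply coeff_zero_of_gt
    rcases h with h | h
    · left; omega
    · right; exact h
  rw [hz]
  have : (fun _ : ℝ × ℝ => (0:ℝ)) = (0 : ℝ × ℝ → ℝ) := rfl
  rw [← this, iterPmF_zero]
  simp

lemma ndef_rec {m} (hm : SM m) (L : LPDO2) (i j : ℕ) (q : ℝ × ℝ) :
    ndef m L i j q + PmF m (ndef m L (i+1) j) q = L.coeff (i+1, j) q := by
  have hPn : PmF m (ndef m L (i+1) j) q
      = ∑ k ∈ Finset.range (I0 L + 1), (-1:ℝ)^k * (PmF m)^[k+1] (L.coeff (i+2+k, j)) q := by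
    have h1 : PmF m (ndef m L (i+1) j)
        = fun q => ∑ k ∈ Finset.range (I0 L + 1),
            PmF m (fun q => (-1:ℝ)^k * (PmF m)^[k] (L.coeff (i+1+1+k, j)) q) q := by
      exact PmF_sum hm _ _ (fun k _ => contDiff_const.mul (sm_iterPmF hm (L.smooth_coeff _) k))
    rw [h1]
    apply Finset.sum_congr rfl
    intro k _
    rw [PmF_const_mul hm (sm_iterPmF hm (L.smooth_coeff _) k)]
    have : PmF m ((PmF m)^[k] (L.coeff (i+1+1+k, j))) = (PmF m)^[k+1] (L.coeff (i+2+k, j)) := by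
      rw [Function.iterate_succ_apply']
    rw [this]
  set F : ℕ → ℝ := fun k => (-1:ℝ)^k * (PmF m)^[k] (L.coeff (i+1+k, j)) q with hF
  have h2 : PmF m (ndef m L (i+1) j) q = ∑ k ∈ Finset.range (I0 L + 1), (- F (k+1)) := by
    rw [hPn]
    apply Finset.sum_congr rfl
    intro k _
    rw [hF]
    simp only
    have : i + 1 + (k+1) = i + 2 + k := by omega
    rw [this]
    ring
  have h3 : ndef m L i j q = ∑ k ∈ Finset.range (I0 L + 1), F k := rfl
  rw [h3, h2, ← Finset.sum_add_distrib]
  have h4 : ∀ k ∈ Finset.range (I0 L + 1), F k + (- F (k+1)) = -(F (k+1) - F k) := by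
    intro k _; ring
  rw [Finset.sum_congr rfl h4, Finset.sum_neg_distrib, Finset.sum_range_sub (fun k => F k)]
  have hFtop : F (I0 L + 1) = 0 := by
    rw [hF]
    simp only
    have hz : L.coeff (i+1+(I0 L + 1), j) = 0 := coeff_zero_of_gt L (Or.inl (by omega))
    rw [hz]
    have : (fun _ : ℝ × ℝ => (0:ℝ)) = (0 : ℝ × ℝ → ℝ) := rfl
    rw [← this, iterPmF_zero]
    simp
  rw [hFtop, hF]
  simp

noncomputable def NL (m : ℝ × ℝ → ℝ) (hm : SM m) (L : LPDO2) : LPDO2 where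
  coeff := fun ij => ndef m L ij.1 ij.2
  finite_support := by
    apply Set.Finite.subset
      (Set.finite_Icc ((0:ℕ), (0:ℕ)) (I0 L, J0 L))
    intro ij hij
    simp only [Set.mem_setOf_eq] at hij
    simp only [Set.mem_Icc]
    constructor
    · exact ⟨Nat.zero_le _, Nat.zero_le _⟩
    · constructor
      · by_contra h
        exact hij (ndef_zero_of_ge L (Or.inl (by omega)))
      · by_contra h
        exact hij (ndef_zero_of_ge L (Or.inr (by omega)))
  smooth_coeff := fun ij => sm_ndef hm L ij.1 ij.2

noncomputable def rdef (m : ℝ × ℝ → ℝ) (L : LPDO2) (j : ℕ) : ℝ × ℝ → ℝ :=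
  fun q => L.coeff (0, j) q - PmF m (ndef m L 0 j) q

lemma sm_rdef {m} (hm : SM m) (L : LPDO2) (j : ℕ) : SM (rdef m L j) :=
  (L.smooth_coeff _).sub (sm_PmF hm (sm_ndef hm L 0 j))

lemma rdef_zero_of_gt {m} (L : LPDO2) {j : ℕ} (h : J0 L < j) : rdef m L j = fun _ => 0 := by
  funext q
  unfold rdef
  rw [coeff_zero_of_gt L (Or.inr h), ndef_zero_of_ge L (Or.inr h), PmF_zero]
  simp

-- the main division identity
lemma division {m} (hm : SM m) (L : LPDO2) {v : ℝ × ℝ → ℝ} (hv : SM v) (q : ℝ × ℝ) :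
    L.apply v q = Dx ((NL m hm L).apply v) q + m q * (NL m hm L).apply v q
      + ∑ j ∈ Finset.range (J0 L + 1), rdef m L j q * Dy^[j] v q := by
  classical
  set S : Finset (ℕ × ℕ) := Finset.range (I0 L + 2) ×ˢ Finset.range (J0 L + 1) with hS
  have hcov : ∀ ij : ℕ × ℕ, ij ∉ S → L.coeff ij = 0 := by
    intro ij hij
    rw [hS, Finset.mem_product] at hij
    push_neg at hij
    rcases Nat.lt_or_ge ij.1 (I0 L + 2) with h1 | h1
    · have h2 : ¬ ij.2 < J0 L + 1 := by
        intro h3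
        exact absurd (Finset.mem_range.mpr h3) (hij (Finset.mem_range.mpr h1))
      have : L.coeff (ij.1, ij.2) = 0 := coeff_zero_of_gt L (Or.inr (by omega))
      simpa using this
    · have : L.coeff (ij.1, ij.2) = 0 := coeff_zero_of_gt L (Or.inl (by omega))
      simpa using this
  have hcovN : ∀ ij : ℕ × ℕ, ij ∉ S → (NL m hm L).coeff ij = 0 := by
    intro ij hij
    rw [hS, Finset.mem_product] at hij
    push_neg at hij
    show ndef m L ij.1 ij.2 = 0
    rcases Nat.lt_or_ge ij.1 (I0 L + 2) with h1 | h1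
    · have h2 : ¬ ij.2 < J0 L + 1 := by
        intro h3
        exact absurd (Finset.mem_range.mpr h3) (hij (Finset.mem_range.mpr h1))
      exact ndef_zero_of_ge L (Or.inr (by omega))
    · exact ndef_zero_of_ge L (Or.inl (by omega))
  -- expand N-side
  have hNv : (NL m hm L).apply v
      = fun p => ∑ ij ∈ S, ndef m L ij.1 ij.2 p * Dx^[ij.1] (Dy^[ij.2] v) p :=
    LPDO2.apply_eq_sum _ v S hcovN
  have hsmterm : ∀ ij ∈ S, SM (fun p => ndef m L ij.1 ij.2 p * Dx^[ij.1] (Dy^[ij.2] v) p) :=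
    fun ij _ => (sm_ndef hm L ij.1 ij.2).mul (hv.iterDxDy ij.1 ij.2)
  have hDxNv : Dx ((NL m hm L).apply v) q + m q * (NL m hm L).apply v q
      = ∑ ij ∈ S, (PmF m (ndef m L ij.1 ij.2) q * Dx^[ij.1] (Dy^[ij.2] v) q
          + ndef m L ij.1 ij.2 q * Dx^[ij.1+1] (Dy^[ij.2] v) q) := by
    rw [hNv, dx_sum S _ hsmterm]
    simp only
    rw [Finset.mul_sum, ← Finset.sum_add_distrib]
    apply Finset.sum_congr rfl
    intro ij _
    rw [dx_mul (sm_ndef hm L ij.1 ij.2) (hv.iterDxDy ij.1 ij.2)]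
    have hit : Dx (Dx^[ij.1] (Dy^[ij.2] v)) q = Dx^[ij.1+1] (Dy^[ij.2] v) q := by
      rw [Function.iterate_succ_apply']
    simp only [PmF, hit]
    ring
  -- expand L-side
  rw [LPDO2.apply_eq_sum L v S hcov, hDxNv]
  simp only [hS]
  rw [Finset.sum_product_right, Finset.sum_product_right]
  rw [← Finset.sum_add_distrib]
  apply Finset.sum_congr rfl
  intro j hj
  -- peel i = 0 on both sides
  rw [Finset.sum_range_succ' (fun i => L.coeff (i, j) q * Dx^[i] (Dy^[j] v) q) (I0 L + 1)]
  rw [Finset.sum_range_succ'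
    (fun i => PmF m (ndef m L i j) q * Dx^[i] (Dy^[j] v) q
      + ndef m L i j q * Dx^[i+1] (Dy^[j] v) q) (I0 L + 1)]
  have hrec : ∀ i, L.coeff (i+1, j) q = ndef m L i j q + PmF m (ndef m L (i+1) j) q :=
    fun i => (ndef_rec hm L i j q).symm
  have hr0 : L.coeff (0, j) q = rdef m L j q + PmF m (ndef m L 0 j) q := by
    unfold rdef; ring
  rw [Finset.sum_congr rfl (fun i (_ : i ∈ Finset.range (I0 L + 1)) => by
    rw [hrec i] : ∀ i ∈ Finset.range (I0 L + 1), _ = (ndef m L i j q + PmF m (ndef m L (i+1) j) q) * Dx^[i+1] (Dy^[j] v) q)]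
  rw [hr0]
  -- last term of the shifted ndef-sum vanishes
  have htop : ndef m L (I0 L + 1) j q = 0 := by
    rw [ndef_zero_of_ge L (Or.inl (by omega))]
  -- rearrange
  have expand : ∑ i ∈ Finset.range (I0 L + 1),
      (ndef m L i j q + PmF m (ndef m L (i+1) j) q) * Dx^[i+1] (Dy^[j] v) q
      = ∑ i ∈ Finset.range (I0 L + 1), ndef m L i j q * Dx^[i+1] (Dy^[j] v) q
        + ∑ i ∈ Finset.range (I0 L + 1), PmF m (ndef m L (i+1) j) q * Dx^[i+1] (Dy^[j] v) q := by
    rw [← Finset.sum_add_distrib]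
    apply Finset.sum_congr rfl
    intro i _
    ring
  have expand2 : ∑ i ∈ Finset.range (I0 L + 1),
      (PmF m (ndef m L (i+1) j) q * Dx^[i+1] (Dy^[j] v) q
        + ndef m L (i+1) j q * Dx^[i+1+1] (Dy^[j] v) q)
      = ∑ i ∈ Finset.range (I0 L + 1), PmF m (ndef m L (i+1) j) q * Dx^[i+1] (Dy^[j] v) q
        + ∑ i ∈ Finset.range (I0 L + 1), ndef m L (i+1) j q * Dx^[i+1+1] (Dy^[j] v) q := by
    rw [← Finset.sum_add_distrib]
  have shift : ∑ i ∈ Finset.range (I0 L + 1), ndef m L i j q * Dx^[i+1] (Dy^[j] v) q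
      = ∑ i ∈ Finset.range (I0 L + 1), ndef m L (i+1) j q * Dx^[i+1+1] (Dy^[j] v) q
        + ndef m L 0 j q * Dx^[0+1] (Dy^[j] v) q - ndef m L (I0 L + 1) j q * Dx^[I0 L + 1 + 1] (Dy^[j] v) q := by
    rw [Finset.sum_range_succ' (fun i => ndef m L i j q * Dx^[i+1] (Dy^[j] v) q) (I0 L)]
    rw [Finset.sum_range_succ (fun i => ndef m L (i+1) j q * Dx^[i+1+1] (Dy^[j] v) q) (I0 L)]
    ring
  rw [expand, expand2, shift, htop]
  simp only [PmF, Function.iterate_zero, id]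
  ring

section Main
variable {m f : ℝ × ℝ → ℝ} (hm : SM m) (hf : SM f) (L G : LPDO2)

lemma star (hm : SM m) (hf : SM f)
    (heq : ∀ u : ℝ × ℝ → ℝ, ContDiff ℝ (⊤ : ℕ∞) u → ∀ p : ℝ × ℝ,
      L.apply (fun q => Dy u q + f q * u q) p = Dx (G.apply u) p + m p * G.apply u p)
    {u : ℝ × ℝ → ℝ} (hu : SM u) (q : ℝ × ℝ) :
    ∑ j ∈ Finset.range (J0 L + 1), rdef m L j q * Dy^[j] (fun q => Dy u q + f q * u q) q
      = PmF m (fun q' => G.apply u q'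
          - (NL m hm L).apply (fun q => Dy u q + f q * u q) q') q := by
  set v : ℝ × ℝ → ℝ := fun q => Dy u q + f q * u q with hv
  have hvsm : SM v := hu.dy.add (hf.mul hu)
  have hdiv := division hm L hvsm q
  have hheq := heq u hu q
  have hGsm : SM (G.apply u) := G.sm_apply hu
  have hNsm : SM ((NL m hm L).apply v) := (NL m hm L).sm_apply hvsm
  have hsub : Dx (fun q' => G.apply u q' - (NL m hm L).apply v q') q
      = Dx (G.apply u) q - Dx ((NL m hm L).apply v) q := by
    rw [dx_sub hGsm hNsm]
  simp only [PmF, hsub]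
  rw [← hv] at hheq
  linear_combination hheq - hdiv

end Main

lemma sm_iterDeriv {g : ℝ → ℝ} (hg : ContDiff ℝ (⊤ : ℕ∞) g) (j : ℕ) : ContDiff ℝ (⊤ : ℕ∞) (deriv^[j] g) := by
  induction j generalizing g with
  | zero => exact hg
  | succ n ih => rw [Function.iterate_succ_apply]; exact ih (sm_deriv hg)

lemma deriv_pow_sub (c : ℝ) (n : ℕ) :
    deriv (fun y : ℝ => (y - c) ^ n) = fun y => (n : ℝ) * (y - c) ^ (n - 1) := by
  funext y
  have h1 : HasDerivAt (fun y : ℝ => (y - c) ^ n) ((n:ℝ) * (y - c) ^ (n-1) * 1) y :=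
    ((hasDerivAt_id y).sub_const c).pow n
  rw [h1.deriv]; ring

lemma sm_if {c : Prop} [Decidable c] {F : ℝ × ℝ → ℝ} (hF : SM F) :
    SM (fun q => if c then F q else 0) := by
  by_cases h : c
  · simpa [h] using hF
  · simpa [h] using (contDiff_const : SM (fun _ => (0:ℝ)))

lemma key_c {m f : ℝ × ℝ → ℝ} (hm : SM m) (hf : SM f) (L G : LPDO2)
    (heq : ∀ u : ℝ × ℝ → ℝ, ContDiff ℝ (⊤ : ℕ∞) u → ∀ p : ℝ × ℝ,
      L.apply (fun q => Dy u q + f q * u q) p = Dx (G.apply u) p + m p * G.apply u p)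
    (p : ℝ × ℝ) (J : ℕ) :
    ∑ j ∈ Finset.range (J0 L + 1), rdef m L j p
        * Dy^[j] (fun q => ((J:ℝ)+1) * (q.2 - p.2) ^ J + f q * (q.2 - p.2) ^ (J+1)) p = 0 := by
  classical
  set p1 := p.1
  set p2 := p.2
  set gJ : ℝ → ℝ := fun y => (y - p2) ^ (J+1) with hgJ
  have hgJsm : ContDiff ℝ (⊤ : ℕ∞) gJ := by
    simpa [hgJ] using (((contDiff_id (E := ℝ)).sub contDiff_const).pow (J+1))
  set W : ℝ × ℝ → ℝ := fun q => gJ q.2 with hW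
  have hWsm : SM W := sm_comp_snd hgJsm
  set V : ℝ × ℝ → ℝ := fun q => ((J:ℝ)+1) * (q.2 - p2) ^ J + f q * (q.2 - p2) ^ (J+1) with hV
  have hVsm : SM V := by
    apply ContDiff.add
    · exact sm_pow_snd _ _ _
    · exact hf.mul (by simpa using sm_pow_snd 1 p2 (J+1))
  -- the test functions
  set u : ℝ → ℝ × ℝ → ℝ := fun t q => Ee t p1 q * W q with hu
  have husm : ∀ t, SM (u t) := fun t => (sm_Ee t p1).mul hWsm
  have hvt : ∀ t, (fun q => Dy (u t) q + f q * u t q) = fun q => Ee t p1 q * V q := by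
    intro t
    funext q
    have h1 : Dy (u t) q = Dy (Ee t p1) q * W q + Ee t p1 q * Dy W q := by
      rw [hu]
      rw [dy_mul (sm_Ee t p1) hWsm]
    have h2 : Dy W q = ((J:ℝ)+1) * (q.2 - p2) ^ J := by
      rw [hW, dy_comp_snd hgJsm, hgJ, deriv_pow_sub]
      push_cast
      simp
    rw [h1, h2, dy_Ee, hu, hV, hW, hgJ]
    simp only
    ring
  -- index sets
  set SG : Finset (ℕ × ℕ) := Finset.range (I0 G + 1) ×ˢ Finset.range (J0 G + 1) with hSG
  set SN : Finset (ℕ × ℕ) := Finset.range (I0 L + 1) ×ˢ Finset.range (J0 L + 1) with hSN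
  have hcovG : ∀ ij : ℕ × ℕ, ij ∉ SG → G.coeff ij = 0 := by
    intro ij hij
    rw [hSG, Finset.mem_product] at hij
    push_neg at hij
    rcases Nat.lt_or_ge ij.1 (I0 G + 1) with h1 | h1
    · have h2 : ¬ ij.2 < J0 G + 1 := fun h3 =>
        absurd (Finset.mem_range.mpr h3) (hij (Finset.mem_range.mpr h1))
      have : G.coeff (ij.1, ij.2) = 0 := coeff_zero_of_gt G (Or.inr (by omega))
      simpa using this
    · have : G.coeff (ij.1, ij.2) = 0 := coeff_zero_of_gt G (Or.inl (by omega))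
      simpa using this
  have hcovN : ∀ ij : ℕ × ℕ, ij ∉ SN → (NL m hm L).coeff ij = 0 := by
    intro ij hij
    rw [hSN, Finset.mem_product] at hij
    push_neg at hij
    show ndef m L ij.1 ij.2 = 0
    rcases Nat.lt_or_ge ij.1 (I0 L + 1) with h1 | h1
    · have h2 : ¬ ij.2 < J0 L + 1 := fun h3 =>
        absurd (Finset.mem_range.mpr h3) (hij (Finset.mem_range.mpr h1))
      exact ndef_zero_of_ge L (Or.inr (by omega))
    · exact ndef_zero_of_ge L (Or.inl (by omega))
  set K : ℕ := max (I0 G) (I0 L) with hK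
  -- the coefficient functions B k
  set B : ℕ → ℝ × ℝ → ℝ := fun k q =>
    (∑ ij ∈ SG, if ij.1 = k then G.coeff ij q * deriv^[ij.2] gJ q.2 else 0)
    - (∑ ij ∈ SN, if k ≤ ij.1 then
        (ij.1.choose k : ℝ) * (ndef m L ij.1 ij.2 q * Dx^[ij.1 - k] (Dy^[ij.2] V) q) else 0)
    with hB
  have hBsm : ∀ k, SM (B k) := by
    intro k
    apply ContDiff.sub
    · exact sm_sum _ _ (fun ij _ => sm_if ((G.smooth_coeff ij).mul
        (sm_comp_snd (sm_iterDeriv hgJsm ij.2))))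
    · exact sm_sum _ _ (fun ij _ => sm_if (contDiff_const.mul
        ((sm_ndef hm L ij.1 ij.2).mul ((hVsm.iterDy ij.2).iterDx (ij.1 - k)))))
  have hBz : ∀ k, K < k → B k = fun _ => 0 := by
    intro k hk
    funext q
    rw [hB]
    simp only
    have e1 : ∀ ij ∈ SG, (if ij.1 = k then G.coeff ij q * deriv^[ij.2] gJ q.2 else 0) = 0 := by
      intro ij hij
      rw [hSG, Finset.mem_product, Finset.mem_range] at hij
      rw [if_neg (by omega)]
    have e2 : ∀ ij ∈ SN, (if k ≤ ij.1 then
        (ij.1.choose k : ℝ) * (ndef m L ij.1 ij.2 q * Dx^[ij.1 - k] (Dy^[ij.2] V) q) else 0) = 0 := by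
      intro ij hij
      rw [hSN, Finset.mem_product, Finset.mem_range] at hij
      rw [if_neg (by omega)]
    rw [Finset.sum_congr rfl e1, Finset.sum_congr rfl e2]
    simp
  -- Claim C1
  have hGut : ∀ t, G.apply (u t)
      = fun q => Ee t p1 q * ∑ ij ∈ SG, t ^ ij.1 * (G.coeff ij q * deriv^[ij.2] gJ q.2) := by
    intro t
    rw [G.apply_eq_sum (u t) SG hcovG]
    funext q
    rw [Finset.mul_sum]
    apply Finset.sum_congr rfl
    intro ij _
    have h1 : Dy^[ij.2] (u t) = fun q => Ee t p1 q * (deriv^[ij.2] gJ) q.2 := by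
      rw [hu]
      rw [iterDy_Ee_mul hWsm t p1 ij.2, hW]
      rw [iterDy_comp_snd hgJsm ij.2]
    have h2 : Dx^[ij.1] (Dy^[ij.2] (u t)) = fun q => t ^ ij.1 * (Ee t p1 q * (deriv^[ij.2] gJ) q.2) := by
      rw [h1]
      exact iterDx_Ee_mul_xconst (sm_comp_snd (sm_iterDeriv hgJsm ij.2))
        (dx_comp_snd (sm_iterDeriv hgJsm ij.2)) t p1 ij.1
    rw [h2]
    ring
  have hNvt : ∀ t, (NL m hm L).apply (fun q => Ee t p1 q * V q)
      = fun q => Ee t p1 q * ∑ ij ∈ SN, ∑ k ∈ Finset.range (K+1),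
          (if k ≤ ij.1 then t ^ k * ((ij.1.choose k : ℝ)
            * (ndef m L ij.1 ij.2 q * Dx^[ij.1 - k] (Dy^[ij.2] V) q)) else 0) := by
    intro t
    rw [LPDO2.apply_eq_sum _ _ SN hcovN]
    funext q
    rw [Finset.mul_sum]
    apply Finset.sum_congr rfl
    intro ij hij
    have hiK : ij.1 ≤ K := by
      have h9 : I0 L ≤ K := le_max_right _ _
      rw [hSN, Finset.mem_product, Finset.mem_range] at hij
      omega
    have h1 : Dy^[ij.2] (fun q => Ee t p1 q * V q) = fun q => Ee t p1 q * Dy^[ij.2] V q :=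
      iterDy_Ee_mul hVsm t p1 ij.2
    have h2 : Dx^[ij.1] (Dy^[ij.2] (fun q => Ee t p1 q * V q))
        = fun q => Ee t p1 q * ∑ k ∈ Finset.range (ij.1+1),
            (ij.1.choose k : ℝ) * t ^ k * Dx^[ij.1-k] (Dy^[ij.2] V) q := by
      rw [h1]
      exact iterDx_Ee_mul (hVsm.iterDy ij.2) t p1 ij.1
    rw [h2]
    simp only
    have h3 : ∑ k ∈ Finset.range (ij.1+1),
        (ij.1.choose k : ℝ) * t ^ k * Dx^[ij.1-k] (Dy^[ij.2] V) q
        = ∑ k ∈ Finset.range (K+1), (if k ≤ ij.1 then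
            (ij.1.choose k : ℝ) * t ^ k * Dx^[ij.1-k] (Dy^[ij.2] V) q else 0) := by
      have hsub : Finset.range (ij.1+1) ⊆ Finset.range (K+1) := by
        intro x hx
        rw [Finset.mem_range] at hx ⊢
        omega
      have e1 : ∑ k ∈ Finset.range (ij.1+1),
          (ij.1.choose k : ℝ) * t ^ k * Dx^[ij.1-k] (Dy^[ij.2] V) q
          = ∑ k ∈ Finset.range (ij.1+1), (if k ≤ ij.1 then
            (ij.1.choose k : ℝ) * t ^ k * Dx^[ij.1-k] (Dy^[ij.2] V) q else 0) := by
        apply Finset.sum_congr rfl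
        intro k hk
        rw [Finset.mem_range] at hk
        rw [if_pos (by omega)]
      rw [e1]
      apply Finset.sum_subset hsub
      intro x _ hx
      rw [Finset.mem_range] at hx
      rw [if_neg (by omega)]
    have hco : (NL m hm L).coeff ij = ndef m L ij.1 ij.2 := rfl
    rw [hco, h3, Finset.mul_sum, Finset.mul_sum, Finset.mul_sum]
    apply Finset.sum_congr rfl
    intro k _
    by_cases hki : k ≤ ij.1
    · rw [if_pos hki, if_pos hki]
      ring
    · rw [if_neg hki, if_neg hki]
      ring
  have hGpart : ∀ t q, ∑ ij ∈ SG, t ^ ij.1 * (G.coeff ij q * deriv^[ij.2] gJ q.2)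
      = ∑ k ∈ Finset.range (K+1), t ^ k *
          ∑ ij ∈ SG, (if ij.1 = k then G.coeff ij q * deriv^[ij.2] gJ q.2 else 0) := by
    intro t q
    have step1 : ∑ k ∈ Finset.range (K+1), t ^ k *
          ∑ ij ∈ SG, (if ij.1 = k then G.coeff ij q * deriv^[ij.2] gJ q.2 else 0)
        = ∑ k ∈ Finset.range (K+1), ∑ ij ∈ SG,
            (if ij.1 = k then t ^ k * (G.coeff ij q * deriv^[ij.2] gJ q.2) else 0) := by
      apply Finset.sum_congr rfl
      intro k _
      rw [Finset.mul_sum]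
      apply Finset.sum_congr rfl
      intro ij _
      by_cases h : ij.1 = k
      · rw [if_pos h, if_pos h]
      · rw [if_neg h, if_neg h]; ring
    rw [step1, Finset.sum_comm]
    apply Finset.sum_congr rfl
    intro ij hij
    have hmem : ij.1 ∈ Finset.range (K+1) := by
      have h9 : I0 G ≤ K := le_max_left _ _
      rw [hSG, Finset.mem_product, Finset.mem_range] at hij
      rw [Finset.mem_range]
      omega
    rw [Finset.sum_ite_eq (Finset.range (K+1)) ij.1
      (fun k => t ^ k * (G.coeff ij q * deriv^[ij.2] gJ q.2)), if_pos hmem]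
  have hNpart : ∀ t q, (∑ ij ∈ SN, ∑ k ∈ Finset.range (K+1),
        (if k ≤ ij.1 then t ^ k * ((ij.1.choose k : ℝ)
          * (ndef m L ij.1 ij.2 q * Dx^[ij.1 - k] (Dy^[ij.2] V) q)) else 0))
      = ∑ k ∈ Finset.range (K+1), t ^ k *
          ∑ ij ∈ SN, (if k ≤ ij.1 then
            (ij.1.choose k : ℝ) * (ndef m L ij.1 ij.2 q * Dx^[ij.1 - k] (Dy^[ij.2] V) q) else 0) := by
    intro t q
    rw [Finset.sum_comm]
    apply Finset.sum_congr rfl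
    intro k _
    rw [Finset.mul_sum]
    apply Finset.sum_congr rfl
    intro ij _
    by_cases h : k ≤ ij.1
    · rw [if_pos h, if_pos h]
    · rw [if_neg h, if_neg h]; ring
  have hC1 : ∀ t, (fun q => G.apply (u t) q
        - (NL m hm L).apply (fun q' => Dy (u t) q' + f q' * u t q') q)
      = fun q => Ee t p1 q * ∑ k ∈ Finset.range (K+1), t ^ k * B k q := by
    intro t
    funext q
    rw [hvt t, hGut t, hNvt t]
    simp only
    rw [← mul_sub]
    congr 1
    rw [hGpart t q, hNpart t q, hB]
    simp only
    rw [← Finset.sum_sub_distrib]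
    apply Finset.sum_congr rfl
    intro k _
    ring
  -- Step D: master identity in t
  have hSMψ : ∀ t : ℝ, SM (fun q => ∑ k ∈ Finset.range (K+1), t ^ k * B k q) :=
    fun t => sm_sum _ _ (fun k _ => contDiff_const.mul (hBsm k))
  set cf : ℝ × ℝ → ℝ := fun q => ∑ j ∈ Finset.range (J0 L + 1), rdef m L j q * Dy^[j] V q
    with hcf
  have eq0 : ∀ (t : ℝ) (q : ℝ × ℝ),
      t * (∑ k ∈ Finset.range (K+1), t ^ k * B k q)
        + (∑ k ∈ Finset.range (K+1), t ^ k * Dx (B k) q)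
        + m q * (∑ k ∈ Finset.range (K+1), t ^ k * B k q) = cf q := by
    intro t q
    have hs := _root_.star L G hm hf heq (husm t) q
    rw [hC1 t] at hs
    have hL : ∑ j ∈ Finset.range (J0 L + 1),
        rdef m L j q * Dy^[j] (fun q => Dy (u t) q + f q * u t q) q
        = Ee t p1 q * cf q := by
      rw [hvt t, hcf]
      simp only
      rw [Finset.mul_sum]
      apply Finset.sum_congr rfl
      intro j _
      simp only [iterDy_Ee_mul hVsm t p1 j]
      ring
    rw [hL] at hs
    have hR : PmF m (fun q => Ee t p1 q * ∑ k ∈ Finset.range (K+1), t ^ k * B k q) q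
        = Ee t p1 q * (t * (∑ k ∈ Finset.range (K+1), t ^ k * B k q)
          + (∑ k ∈ Finset.range (K+1), t ^ k * Dx (B k) q)
          + m q * (∑ k ∈ Finset.range (K+1), t ^ k * B k q)) := by
      have hdψ : Dx (fun q => ∑ k ∈ Finset.range (K+1), t ^ k * B k q)
          = fun q => ∑ k ∈ Finset.range (K+1), t ^ k * Dx (B k) q := by
        rw [dx_sum _ _ (fun k _ => contDiff_const.mul (hBsm k))]
        funext q'
        apply Finset.sum_congr rfl
        intro k _
        rw [dx_const_mul (hBsm k)]
      simp only [PmF, dx_mul (sm_Ee t p1) (hSMψ t), dx_Ee, hdψ]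
      ring
    rw [hR] at hs
    have hEne : Ee t p1 q ≠ 0 := Real.exp_ne_zero _
    exact (mul_left_cancel₀ hEne hs).symm
  -- Step E: coefficient extraction
  have hcoeffs : ∀ q : ℝ × ℝ, ∀ k, k < K + 2 →
      (if k = 0 then Dx (B 0) q + m q * B 0 q - cf q
        else B (k-1) q + (if k ≤ K then Dx (B k) q + m q * B k q else 0)) = 0 := by
    intro q
    apply poly_coeff_zero (K+2)
    intro t
    have split : ∀ k ∈ Finset.range (K+2),
        (if k = 0 then Dx (B 0) q + m q * B 0 q - cf q
          else B (k-1) q + (if k ≤ K then Dx (B k) q + m q * B k q else 0)) * t ^ k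
        = (if k = 0 then 0 else B (k-1) q) * t ^ k
          + (if k ≤ K then Dx (B k) q + m q * B k q else 0) * t ^ k
          - (if k = 0 then cf q else 0) * t ^ k := by
      intro k _
      by_cases h0 : k = 0
      · subst h0
        rw [if_pos rfl, if_pos rfl, if_pos rfl, if_pos (by omega)]
        ring
      · rw [if_neg h0, if_neg h0, if_neg h0]
        ring
    rw [Finset.sum_congr rfl split, Finset.sum_sub_distrib, Finset.sum_add_distrib]
    have T1 : ∑ k ∈ Finset.range (K+2), (if k = 0 then (0:ℝ) else B (k-1) q) * t ^ k
        = t * ∑ k ∈ Finset.range (K+1), t ^ k * B k q := by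
      rw [Finset.sum_range_succ' (fun k => (if k = 0 then (0:ℝ) else B (k-1) q) * t ^ k) (K+1)]
      have e : ∀ k ∈ Finset.range (K+1),
          (if k + 1 = 0 then (0:ℝ) else B (k+1-1) q) * t ^ (k+1) = t * (t ^ k * B k q) := by
        intro k _
        rw [if_neg (Nat.succ_ne_zero k)]
        simp only [Nat.add_sub_cancel]
        ring
      rw [Finset.sum_congr rfl e, if_pos rfl, Finset.mul_sum]
      ring
    have T2 : ∑ k ∈ Finset.range (K+2), (if k ≤ K then Dx (B k) q + m q * B k q else 0) * t ^ k
        = (∑ k ∈ Finset.range (K+1), t ^ k * Dx (B k) q)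
          + m q * ∑ k ∈ Finset.range (K+1), t ^ k * B k q := by
      rw [Finset.sum_range_succ, if_neg (by omega), zero_mul, add_zero]
      have e : ∀ k ∈ Finset.range (K+1), (if k ≤ K then Dx (B k) q + m q * B k q else 0) * t ^ k
          = t ^ k * Dx (B k) q + m q * (t ^ k * B k q) := by
        intro k hk
        rw [Finset.mem_range] at hk
        rw [if_pos (by omega)]
        ring
      rw [Finset.sum_congr rfl e, Finset.sum_add_distrib, Finset.mul_sum]
    have T3 : ∑ k ∈ Finset.range (K+2), (if k = 0 then cf q else 0) * t ^ k = cf q := by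
      rw [Finset.sum_eq_single_of_mem 0 (Finset.mem_range.mpr (by omega))]
      · simp
      · intro b _ hb
        rw [if_neg hb, zero_mul]
    rw [T1, T2, T3]
    linear_combination eq0 t q
  have hb0 : ∀ q, Dx (B 0) q + m q * B 0 q = cf q := by
    intro q
    have h := hcoeffs q 0 (by omega)
    rw [if_pos rfl] at h
    linarith
  have hmid : ∀ k, 1 ≤ k → k ≤ K → ∀ q, B (k-1) q + (Dx (B k) q + m q * B k q) = 0 := by
    intro k h1 h2 q
    have h := hcoeffs q k (by omega)
    rw [if_neg (by omega), if_pos h2] at h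
    exact h
  have hBK : ∀ q, B K q = 0 := by
    intro q
    have h := hcoeffs q (K+1) (by omega)
    rw [if_neg (by omega), if_neg (by omega)] at h
    simpa using h
  -- Step F: downward induction
  have hdown : ∀ n k, K ≤ k + n → B k = fun _ => 0 := by
    intro n
    induction n with
    | zero =>
      intro k hk
      rcases Nat.eq_or_lt_of_le (by omega : K ≤ k) with h | h
      · subst h
        funext q
        exact hBK q
      · exact hBz k h
    | succ n ih =>
      intro k hk
      by_cases h : K ≤ k + n
      · exact ih k h
      · have hB1 : B (k+1) = fun _ => 0 := ih (k+1) (by omega)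
        funext q
        have h2 := hmid (k+1) (by omega) (by omega) q
        rw [hB1, dx_zero] at h2
        simpa using h2
  have hB0 : B 0 = fun _ => 0 := hdown K 0 (by omega)
  have hcf0 : ∀ q, cf q = 0 := by
    intro q
    rw [← hb0 q, hB0, dx_zero]
    simp
  have := hcf0 p
  rw [hcf] at this
  simpa [hV] using this

lemma rJ_zero {m f : ℝ × ℝ → ℝ} (hm : SM m) (hf : SM f) (L G : LPDO2)
    (heq : ∀ u : ℝ × ℝ → ℝ, ContDiff ℝ (⊤ : ℕ∞) u → ∀ p : ℝ × ℝ,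
      L.apply (fun q => Dy u q + f q * u q) p = Dx (G.apply u) p + m p * G.apply u p)
    (p : ℝ × ℝ) (J : ℕ) (hJle : J ≤ J0 L)
    (hgt : ∀ j, J < j → rdef m L j p = 0) : rdef m L J p = 0 := by
  have hkc := key_c hm hf L G heq p J
  have hA : SM (fun q : ℝ × ℝ => ((J:ℝ)+1) * (q.2 - p.2) ^ J) := sm_pow_snd _ _ _
  have hBf : SM (fun q : ℝ × ℝ => f q * (q.2 - p.2) ^ (J+1)) :=
    hf.mul (by simpa using sm_pow_snd 1 p.2 (J+1))
  have hgA : ContDiff ℝ (⊤ : ℕ∞) (fun y : ℝ => ((J:ℝ)+1) * (y - p.2) ^ J) :=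
    contDiff_const.mul (((contDiff_id (E := ℝ)).sub contDiff_const).pow J)
  have hDyV : ∀ j, j ≤ J →
      Dy^[j] (fun q : ℝ × ℝ => ((J:ℝ)+1) * (q.2 - p.2) ^ J + f q * (q.2 - p.2) ^ (J+1)) p
        = ((J:ℝ)+1) * (J.descFactorial j : ℝ) * (0:ℝ) ^ (J-j) := by
    intro j hj
    have hstep : Dy^[j] (fun q : ℝ × ℝ => ((J:ℝ)+1) * (q.2 - p.2) ^ J + f q * (q.2 - p.2) ^ (J+1)) p
        = Dy^[j] (fun q : ℝ × ℝ => ((J:ℝ)+1) * (q.2 - p.2) ^ J) p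
          + Dy^[j] (fun q : ℝ × ℝ => f q * (q.2 - p.2) ^ (J+1)) p := by
      rw [iterDy_add hA hBf j]
    rw [hstep]
    have h1 : Dy^[j] (fun q : ℝ × ℝ => ((J:ℝ)+1) * (q.2 - p.2) ^ J) p
        = ((J:ℝ)+1) * (J.descFactorial j : ℝ) * (0:ℝ) ^ (J-j) := by
      rw [iterDy_comp_snd hgA j, iterDeriv_pow' ((J:ℝ)+1) p.2 J j]
      simp
    have h2 : Dy^[j] (fun q : ℝ × ℝ => f q * (q.2 - p.2) ^ (J+1)) p = 0 := by
      have := iterDy_mul_pow_vanish p.2 j (J+1) f hf (by omega) p.1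
      rwa [Prod.mk.eta] at this
    rw [h1, h2, add_zero]
  have hsingle : ∑ j ∈ Finset.range (J0 L + 1), rdef m L j p
      * Dy^[j] (fun q : ℝ × ℝ => ((J:ℝ)+1) * (q.2 - p.2) ^ J + f q * (q.2 - p.2) ^ (J+1)) p
      = rdef m L J p
        * Dy^[J] (fun q : ℝ × ℝ => ((J:ℝ)+1) * (q.2 - p.2) ^ J + f q * (q.2 - p.2) ^ (J+1)) p := by
    apply Finset.sum_eq_single_of_mem J (Finset.mem_range.mpr (by omega))
    intro b _ hbJ
    rcases Nat.lt_or_ge J b with h | h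
    · rw [hgt b h, zero_mul]
    · have hb : b < J := by omega
      rw [hDyV b (by omega)]
      rw [zero_pow (by omega : J - b ≠ 0)]
      ring
  rw [hsingle, hDyV J le_rfl, Nat.sub_self, pow_zero, Nat.descFactorial_self] at hkc
  have hne : ((J:ℝ)+1) * (J.factorial : ℝ) * 1 ≠ 0 := by
    have h1 : (0:ℝ) < (J:ℝ)+1 := by positivity
    have h2 : (0:ℝ) < (J.factorial : ℝ) := by
      exact_mod_cast Nat.factorial_pos J
    positivity
  rcases mul_eq_zero.mp hkc with h | h
  · exact h
  · exact absurd h hne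

lemma rzero {m f : ℝ × ℝ → ℝ} (hm : SM m) (hf : SM f) (L G : LPDO2)
    (heq : ∀ u : ℝ × ℝ → ℝ, ContDiff ℝ (⊤ : ℕ∞) u → ∀ p : ℝ × ℝ,
      L.apply (fun q => Dy u q + f q * u q) p = Dx (G.apply u) p + m p * G.apply u p)
    (p : ℝ × ℝ) (j : ℕ) : rdef m L j p = 0 := by
  have main : ∀ n J, J0 L ≤ J + n → rdef m L J p = 0 := by
    intro n
    induction n with
    | zero =>
      intro J hJ
      rcases Nat.eq_or_lt_of_le (by omega : J0 L ≤ J) with h | h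
      · subst h
        apply rJ_zero hm hf L G heq p _ le_rfl
        intro j hj
        rw [rdef_zero_of_gt L hj]
      · rw [rdef_zero_of_gt L h]
    | succ n ih =>
      intro J hJ
      by_cases h : J0 L ≤ J + n
      · exact ih J h
      · apply rJ_zero hm hf L G heq p J (by omega)
        intro j hj
        exact ih j (by omega)
  rcases Nat.lt_or_ge (J0 L) j with h | h
  · rw [rdef_zero_of_gt L h]
  · exact main (J0 L) j (by omega)


/-- If `A := L ∘ (D_y + f) = (D_x + m) ∘ G` as operators on smooth functions, then there
exists an LPDO `N` with `L = (D_x + m) ∘ N`, and hence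
`A = (D_x + m) ∘ N ∘ (D_y + f)` is a factorization of `A` into three factors. -/
theorem refinement_of_two_factor_factorizations
    (m f : ℝ × ℝ → ℝ) (hm : ContDiff ℝ (⊤ : ℕ∞) m) (hf : ContDiff ℝ (⊤ : ℕ∞) f)
    (L G : LPDO2)
    (heq : ∀ u : ℝ × ℝ → ℝ, ContDiff ℝ (⊤ : ℕ∞) u → ∀ p : ℝ × ℝ,
      L.apply (fun q => Dy u q + f q * u q) p
        = Dx (G.apply u) p + m p * G.apply u p) :
    ∃ N : LPDO2,
      (∀ u : ℝ × ℝ → ℝ, ContDiff ℝ (⊤ : ℕ∞) u → ∀ p : ℝ × ℝ,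
        L.apply u p = Dx (N.apply u) p + m p * N.apply u p) ∧
      (∀ u : ℝ × ℝ → ℝ, ContDiff ℝ (⊤ : ℕ∞) u → ∀ p : ℝ × ℝ,
        L.apply (fun q => Dy u q + f q * u q) p
          = Dx (N.apply (fun q => Dy u q + f q * u q)) p
            + m p * N.apply (fun q => Dy u q + f q * u q) p) := by
  refine ⟨NL m hm L, ?_, ?_⟩
  · intro u hu p
    have hdiv := division hm L hu p
    have hz : ∑ j ∈ Finset.range (J0 L + 1), rdef m L j p * Dy^[j] u p = 0 := by
      apply Finset.sum_eq_zero
      intro j _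
      rw [rzero hm hf L G heq p j, zero_mul]
    rw [hz, add_zero] at hdiv
    exact hdiv
  · intro u hu p
    have hv : SM (fun q => Dy u q + f q * u q) := (SM.dy hu).add (hf.mul hu)
    have hdiv := division hm L hv p
    have hz : ∑ j ∈ Finset.range (J0 L + 1),
        rdef m L j p * Dy^[j] (fun q => Dy u q + f q * u q) p = 0 := by
      apply Finset.sum_eq_zero
      intro j _
      rw [rzero hm hf L G heq p j, zero_mul]
    rw [hz, add_zero] at hdiv
    exact hdiv
end

section
/- The second-order operator D_x² + x D_xD_y + D_x + (2+x) D_y (the irreducible factor in Landau's example) admits no factorization into two monic first-order factors on ℝ²: there are no smooth functions r, s : ℝ² → ℝ such that D_x² + x D_xD_y + D_x + (2+x) D_y = (D_x + r) ∘ (D_x + x D_y + s), and there are no smooth functions r, s : ℝ² → ℝ such that D_x² + x D_xD_y + D_x + (2+x) D_y = (D_x + x D_y + s) ∘ (D_x + r), as operators on smooth functions ℝ² → ℝ. (The principal symbol X² + xXY factors as X·(X + xY), so these are the only possible types of monic first-order factorizations.) -/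
lemma snd_fderiv (q : ℝ × ℝ) :
    fderiv ℝ (fun p : ℝ × ℝ => p.2) q = ContinuousLinearMap.snd ℝ ℝ ℝ :=
  hasFDerivAt_snd.fderiv

lemma Dx_snd : Dx (fun p : ℝ × ℝ => p.2) = fun _ => 0 := by
  funext q; simp [Dx, snd_fderiv]

lemma Dy_snd : Dy (fun p : ℝ × ℝ => p.2) = fun _ => 1 := by
  funext q; simp [Dy, snd_fderiv]

lemma mul_snd_fderiv (f : ℝ × ℝ → ℝ) (hf : ContDiff ℝ (⊤ : ℕ∞) f) (v : ℝ × ℝ) :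
    fderiv ℝ (fun q : ℝ × ℝ => f q * q.2) ((0 : ℝ), (0 : ℝ)) v = f (0, 0) * v.2 := by
  have h1 : HasFDerivAt f (fderiv ℝ f ((0 : ℝ), (0 : ℝ))) ((0 : ℝ), (0 : ℝ)) :=
    (hf.differentiable (by simp) ((0 : ℝ), (0 : ℝ))).hasFDerivAt
  have h2 : HasFDerivAt (fun q : ℝ × ℝ => q.2) (ContinuousLinearMap.snd ℝ ℝ ℝ)
      ((0 : ℝ), (0 : ℝ)) := hasFDerivAt_snd
  rw [(h1.fun_mul h2).fderiv]
  simp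

lemma fst_add_mul_snd_fderiv (f : ℝ × ℝ → ℝ) (hf : ContDiff ℝ (⊤ : ℕ∞) f) :
    fderiv ℝ (fun q : ℝ × ℝ => q.1 + f q * q.2) ((0 : ℝ), (0 : ℝ)) ((1 : ℝ), (0 : ℝ)) = 1 := by
  have h1 : HasFDerivAt f (fderiv ℝ f ((0 : ℝ), (0 : ℝ))) ((0 : ℝ), (0 : ℝ)) :=
    (hf.differentiable (by simp) ((0 : ℝ), (0 : ℝ))).hasFDerivAt
  have h2 : HasFDerivAt (fun q : ℝ × ℝ => q.2) (ContinuousLinearMap.snd ℝ ℝ ℝ)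
      ((0 : ℝ), (0 : ℝ)) := hasFDerivAt_snd
  have h3 : HasFDerivAt (fun q : ℝ × ℝ => q.1) (ContinuousLinearMap.fst ℝ ℝ ℝ)
      ((0 : ℝ), (0 : ℝ)) := hasFDerivAt_fst
  rw [(h3.fun_add (h1.fun_mul h2)).fderiv]
  simp

/-- The operator `D_x² + x D_xD_y + D_x + (2+x) D_y` (the irreducible second-order factor
in Landau's example) admits no factorization into two monic first-order factors:
neither of the form `(D_x + r) ∘ (D_x + x D_y + s)` nor of the form
`(D_x + x D_y + s) ∘ (D_x + r)`. -/
theorem landau_factor_irreducible :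
    (¬ ∃ r s : ℝ × ℝ → ℝ, ContDiff ℝ (⊤ : ℕ∞) r ∧ ContDiff ℝ (⊤ : ℕ∞) s ∧
      ∀ u : ℝ × ℝ → ℝ, ContDiff ℝ (⊤ : ℕ∞) u → ∀ p : ℝ × ℝ,
        Dx (Dx u) p + p.1 * Dx (Dy u) p + Dx u p + (2 + p.1) * Dy u p
          = Dx (fun q => Dx u q + q.1 * Dy u q + s q * u q) p
            + r p * (Dx u p + p.1 * Dy u p + s p * u p)) ∧
    (¬ ∃ r s : ℝ × ℝ → ℝ, ContDiff ℝ (⊤ : ℕ∞) r ∧ ContDiff ℝ (⊤ : ℕ∞) s ∧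
      ∀ u : ℝ × ℝ → ℝ, ContDiff ℝ (⊤ : ℕ∞) u → ∀ p : ℝ × ℝ,
        Dx (Dx u) p + p.1 * Dx (Dy u) p + Dx u p + (2 + p.1) * Dy u p
          = Dx (fun q => Dx u q + r q * u q) p
            + p.1 * Dy (fun q => Dx u q + r q * u q) p
            + s p * (Dx u p + r p * u p)) := by
  constructor
  · rintro ⟨r, s, hr, hs, h⟩
    have h0 := h (fun p : ℝ × ℝ => p.2) contDiff_snd ((0 : ℝ), (0 : ℝ))
    have hfun : (fun q : ℝ × ℝ => Dx (fun p : ℝ × ℝ => p.2) q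
        + q.1 * Dy (fun p : ℝ × ℝ => p.2) q + s q * q.2)
        = fun q : ℝ × ℝ => q.1 + s q * q.2 := by
      funext q
      simp [Dx_snd, Dy_snd]
    rw [hfun] at h0
    have hval : Dx (fun q : ℝ × ℝ => q.1 + s q * q.2) ((0 : ℝ), (0 : ℝ)) = 1 := by
      simpa [Dx] using fst_add_mul_snd_fderiv s hs
    rw [hval, Dx_snd, Dy_snd] at h0
    simp [Dx, Dy] at h0
  · rintro ⟨r, s, hr, hs, h⟩
    have h0 := h (fun p : ℝ × ℝ => p.2) contDiff_snd ((0 : ℝ), (0 : ℝ))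
    have hfun : (fun q : ℝ × ℝ => Dx (fun p : ℝ × ℝ => p.2) q + r q * q.2)
        = fun q : ℝ × ℝ => r q * q.2 := by
      funext q
      simp [Dx_snd]
    rw [hfun] at h0
    have hval : Dx (fun q : ℝ × ℝ => r q * q.2) ((0 : ℝ), (0 : ℝ)) = 0 := by
      simpa [Dx] using mul_snd_fderiv r hr ((1 : ℝ), (0 : ℝ))
    rw [hval, Dx_snd, Dy_snd] at h0
    simp [Dx, Dy] at h0
end

section
/- Let α, β ∈ ℝ with α ≠ 0 and β ≠ 0, let w(x,y) = y + αx + β, and let U = {(x,y) ∈ ℝ² : w(x,y) ≠ 0}. Then, as operators on smooth functions on U, D_x²D_y² = (D_x + α/w) ∘ (D_y + 1/w) ∘ (D_xD_y − (1/w)(D_x + αD_y)), i.e., the operator D_x²D_y² admits this factorization into three factors of factorization type (X)(Y)(XY) for every such α, β. -/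
open scoped ContDiff

section aux

variable {f g : ℝ × ℝ → ℝ} {p e : ℝ × ℝ}

lemma fd_sub (hf : DifferentiableAt ℝ f p) (hg : DifferentiableAt ℝ g p) :
    fderiv ℝ (fun s => f s - g s) p e = fderiv ℝ f p e - fderiv ℝ g p e := by
  rw [fderiv_fun_sub hf hg]; rfl

lemma fd_add (hf : DifferentiableAt ℝ f p) (hg : DifferentiableAt ℝ g p) :
    fderiv ℝ (fun s => f s + g s) p e = fderiv ℝ f p e + fderiv ℝ g p e := by
  rw [fderiv_fun_add hf hg]; rfl

lemma fd_mul (hf : DifferentiableAt ℝ f p) (hg : DifferentiableAt ℝ g p) :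
    fderiv ℝ (fun s => f s * g s) p e = fderiv ℝ f p e * g p + f p * fderiv ℝ g p e := by
  rw [fderiv_fun_mul hf hg]
  simp [smul_eq_mul]
  ring

lemma fd_const_mul (c : ℝ) (hf : DifferentiableAt ℝ f p) :
    fderiv ℝ (fun s => c * f s) p e = c * fderiv ℝ f p e := by
  rw [fderiv_const_mul hf]; simp

variable (α β : ℝ)

lemma hasFDerivAt_w (p : ℝ × ℝ) :
    HasFDerivAt (fun s : ℝ × ℝ => s.2 + α * s.1 + β)
      (ContinuousLinearMap.snd ℝ ℝ ℝ + α • ContinuousLinearMap.fst ℝ ℝ ℝ) p := by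
  have h1 : HasFDerivAt (fun s : ℝ × ℝ => s.2) (ContinuousLinearMap.snd ℝ ℝ ℝ) p :=
    hasFDerivAt_snd
  have h2 : HasFDerivAt (fun s : ℝ × ℝ => α * s.1) (α • ContinuousLinearMap.fst ℝ ℝ ℝ) p :=
    (hasFDerivAt_fst.const_smul α : _)
  simpa using (h1.add h2).add_const β

lemma diff_w (p : ℝ × ℝ) : DifferentiableAt ℝ (fun s : ℝ × ℝ => s.2 + α * s.1 + β) p :=
  (hasFDerivAt_w α β p).differentiableAt

lemma fd_invw (hp : p.2 + α * p.1 + β ≠ 0) :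
    fderiv ℝ (fun s : ℝ × ℝ => 1 / (s.2 + α * s.1 + β)) p e
      = -(e.2 + α * e.1) / (p.2 + α * p.1 + β) ^ 2 := by
  have h : HasFDerivAt (fun s : ℝ × ℝ => (s.2 + α * s.1 + β)⁻¹)
      ((-((p.2 + α * p.1 + β) ^ 2)⁻¹) • (ContinuousLinearMap.snd ℝ ℝ ℝ + α • ContinuousLinearMap.fst ℝ ℝ ℝ)) p :=
    (hasDerivAt_inv hp).comp_hasFDerivAt p (hasFDerivAt_w α β p)
  simp only [one_div]
  rw [h.fderiv]
  simp [smul_eq_mul]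
  ring

lemma diff_invw (hp : p.2 + α * p.1 + β ≠ 0) :
    DifferentiableAt ℝ (fun s : ℝ × ℝ => 1 / (s.2 + α * s.1 + β)) p := by
  simp only [one_div]
  exact (diff_w α β p).inv hp

end aux

section smooth

variable {U : Set (ℝ × ℝ)} {f : ℝ × ℝ → ℝ}

lemma cdOn_Dx (hU : IsOpen U) (hf : ContDiffOn ℝ ∞ f U) : ContDiffOn ℝ ∞ (Dx f) U := by
  have h : ContDiffOn ℝ ∞ (fderiv ℝ f) U :=
    hf.fderiv_of_isOpen hU (le_of_eq (rfl : (∞ : WithTop ℕ∞) + 1 = ∞).symm)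
  exact h.clm_apply contDiffOn_const

lemma cdOn_Dy (hU : IsOpen U) (hf : ContDiffOn ℝ ∞ f U) : ContDiffOn ℝ ∞ (Dy f) U := by
  have h : ContDiffOn ℝ ∞ (fderiv ℝ f) U :=
    hf.fderiv_of_isOpen hU (le_of_eq (rfl : (∞ : WithTop ℕ∞) + 1 = ∞).symm)
  exact h.clm_apply contDiffOn_const

lemma diffAt_of_cdOn {F : Type*} [NormedAddCommGroup F] [NormedSpace ℝ F] {f : ℝ × ℝ → F}
    (hU : IsOpen U) (hf : ContDiffOn ℝ ∞ f U) {p : ℝ × ℝ} (hp : p ∈ U) :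
    DifferentiableAt ℝ f p :=
  ((hf p hp).contDiffAt (hU.mem_nhds hp)).differentiableAt (by norm_num)

/-- symmetry of second derivatives for functions smooth on an open set -/
lemma Dxy_symm (hU : IsOpen U) (hf : ContDiffOn ℝ ∞ f U) {p : ℝ × ℝ} (hp : p ∈ U) :
    Dx (Dy f) p = Dy (Dx f) p := by
  have hdf : ContDiffOn ℝ ∞ (fderiv ℝ f) U :=
    hf.fderiv_of_isOpen hU (le_of_eq (rfl : (∞ : WithTop ℕ∞) + 1 = ∞).symm)
  have hev : ∀ᶠ q in nhds p, HasFDerivAt f (fderiv ℝ f q) q := by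
    filter_upwards [hU.mem_nhds hp] with q hq
    exact (diffAt_of_cdOn hU hf hq).hasFDerivAt
  have hx : HasFDerivAt (fderiv ℝ f) (fderiv ℝ (fderiv ℝ f) p) p :=
    (diffAt_of_cdOn hU hdf hp).hasFDerivAt
  have hsymm := second_derivative_symmetric_of_eventually hev hx (1, 0) (0, 1)
  -- Dx (Dy f) p = fderiv (fderiv f) p (1,0) (0,1)
  have key : ∀ v c : ℝ × ℝ, fderiv ℝ (fun q => fderiv ℝ f q c) p v
      = fderiv ℝ (fderiv ℝ f) p v c := by
    intro v c
    have hA : HasFDerivAt (fun q => fderiv ℝ f q c)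
        (((ContinuousLinearMap.apply ℝ ℝ c).comp (fderiv ℝ (fderiv ℝ f) p))) p :=
      (ContinuousLinearMap.apply ℝ ℝ c).hasFDerivAt.comp p hx
    rw [hA.fderiv]; rfl
  show fderiv ℝ (fun q => fderiv ℝ f q (0, 1)) p (1, 0)
      = fderiv ℝ (fun q => fderiv ℝ f q (1, 0)) p (0, 1)
  rw [key, key, hsymm]

end smooth

section main

variable {α β : ℝ}

lemma Dx_eq {f : ℝ × ℝ → ℝ} {p : ℝ × ℝ} : Dx f p = fderiv ℝ f p (1, 0) := rfl
lemma Dy_eq {f : ℝ × ℝ → ℝ} {p : ℝ × ℝ} : Dy f p = fderiv ℝ f p (0, 1) := rfl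

end main

/-- The family of factorizations of `D_x²D_y²` of type `(X)(Y)(XY)`: with
`w = y + αx + β` and on `U = {w ≠ 0}`,
`D_x²D_y² = (D_x + α/w) ∘ (D_y + 1/w) ∘ (D_xD_y − (1/w)(D_x + αD_y))`. -/
theorem family_factorization_of_DxxDyy
    (α β : ℝ) (hα : α ≠ 0) (hβ : β ≠ 0) :
    ∀ u : ℝ × ℝ → ℝ,
      ContDiffOn ℝ (⊤ : ℕ∞) u {p : ℝ × ℝ | p.2 + α * p.1 + β ≠ 0} →
      ∀ p : ℝ × ℝ, p.2 + α * p.1 + β ≠ 0 →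
        Dx (Dx (Dy (Dy u))) p
          =
        (Dx (fun q =>
            Dy (fun s => Dx (Dy u) s
                - (1 / (s.2 + α * s.1 + β)) * (Dx u s + α * Dy u s)) q
              + (1 / (q.2 + α * q.1 + β)) *
                (Dx (Dy u) q - (1 / (q.2 + α * q.1 + β)) * (Dx u q + α * Dy u q))) p
          + (α / (p.2 + α * p.1 + β)) *
            (Dy (fun s => Dx (Dy u) s
                - (1 / (s.2 + α * s.1 + β)) * (Dx u s + α * Dy u s)) p
              + (1 / (p.2 + α * p.1 + β)) *
                (Dx (Dy u) p - (1 / (p.2 + α * p.1 + β)) * (Dx u p + α * Dy u p)))) := by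
  intro u hu0 p hp
  set U : Set (ℝ × ℝ) := {p : ℝ × ℝ | p.2 + α * p.1 + β ≠ 0} with hUdef
  have hU : IsOpen U := by
    have : U = (fun s : ℝ × ℝ => s.2 + α * s.1 + β) ⁻¹' {0}ᶜ := by
      ext q; simp [hUdef]
    rw [this]
    exact (isOpen_compl_singleton).preimage (by fun_prop)
  have hu : ContDiffOn ℝ ∞ u U := hu0.of_le (by simp)
  have hpU : p ∈ U := hp
  -- smoothness of all the players on U
  have hw : ContDiff ℝ ∞ (fun s : ℝ × ℝ => s.2 + α * s.1 + β) := by fun_prop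
  have hinv : ContDiffOn ℝ ∞ (fun s : ℝ × ℝ => 1 / (s.2 + α * s.1 + β)) U :=
    contDiffOn_const.div hw.contDiffOn (fun q hq => hq)
  have hDxu : ContDiffOn ℝ ∞ (Dx u) U := cdOn_Dx hU hu
  have hDyu : ContDiffOn ℝ ∞ (Dy u) U := cdOn_Dy hU hu
  have hDyDyu : ContDiffOn ℝ ∞ (Dy (Dy u)) U := cdOn_Dy hU hDyu
  have hDxDyu : ContDiffOn ℝ ∞ (Dx (Dy u)) U := cdOn_Dx hU hDyu
  have hDxDyDyu : ContDiffOn ℝ ∞ (Dx (Dy (Dy u))) U := cdOn_Dx hU hDyDyu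
  have hsum : ContDiffOn ℝ ∞ (fun s => Dx u s + α * Dy u s) U :=
    hDxu.add (contDiffOn_const.mul hDyu)
  have hg : ContDiffOn ℝ ∞
      (fun s => 1 / (s.2 + α * s.1 + β) * (Dx u s + α * Dy u s)) U := hinv.mul hsum
  have hL : ContDiffOn ℝ ∞
      (fun s => Dx (Dy u) s - 1 / (s.2 + α * s.1 + β) * (Dx u s + α * Dy u s)) U :=
    hDxDyu.sub hg
  -- pointwise differentiability suppliers
  have dd : ∀ {f : ℝ × ℝ → ℝ}, ContDiffOn ℝ ∞ f U → ∀ {q : ℝ × ℝ}, q ∈ U →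
      DifferentiableAt ℝ f q := fun hf _ hq => diffAt_of_cdOn hU hf hq
  -- Step 1: identify the inner function with a simpler one, pointwise on U
  have key : ∀ q ∈ U,
      (Dy (fun s => Dx (Dy u) s
          - 1 / (s.2 + α * s.1 + β) * (Dx u s + α * Dy u s)) q
        + 1 / (q.2 + α * q.1 + β) *
          (Dx (Dy u) q - 1 / (q.2 + α * q.1 + β) * (Dx u q + α * Dy u q)))
      = Dx (Dy (Dy u)) q - α * (1 / (q.2 + α * q.1 + β) * Dy (Dy u) q) := by
    intro q hq
    have hq0 : q.2 + α * q.1 + β ≠ 0 := hq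
    have e1 : Dy (fun s => Dx (Dy u) s
          - 1 / (s.2 + α * s.1 + β) * (Dx u s + α * Dy u s)) q
        = Dy (Dx (Dy u)) q
          - fderiv ℝ (fun s => 1 / (s.2 + α * s.1 + β) * (Dx u s + α * Dy u s)) q (0, 1) := by
      rw [Dy_eq, fd_sub (dd hDxDyu hq) (dd hg hq)]; rfl
    have e2 : fderiv ℝ (fun s => 1 / (s.2 + α * s.1 + β) * (Dx u s + α * Dy u s)) q (0, 1)
        = -(1 + α * 0) / (q.2 + α * q.1 + β) ^ 2 * (Dx u q + α * Dy u q)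
          + 1 / (q.2 + α * q.1 + β) * (Dy (Dx u) q + α * Dy (Dy u) q) := by
      rw [fd_mul (diff_invw α β hq0) (dd hsum hq), fd_invw α β hq0,
        fd_add (dd hDxu hq) ((dd hDyu hq).const_mul α), fd_const_mul α (dd hDyu hq)]
      rfl
    have s1 : Dx (Dy u) q = Dy (Dx u) q := Dxy_symm hU hu hq
    have s2 : Dx (Dy (Dy u)) q = Dy (Dx (Dy u)) q := Dxy_symm hU hDyu hq
    rw [e1, e2, ← s1, ← s2]
    field_simp
    ring
  -- Step 2: replace the argument of the outermost `Dx` up to eventual equality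
  have hev : (fun q =>
      Dy (fun s => Dx (Dy u) s
          - 1 / (s.2 + α * s.1 + β) * (Dx u s + α * Dy u s)) q
        + 1 / (q.2 + α * q.1 + β) *
          (Dx (Dy u) q - 1 / (q.2 + α * q.1 + β) * (Dx u q + α * Dy u q)))
      =ᶠ[nhds p] (fun q => Dx (Dy (Dy u)) q - α * (1 / (q.2 + α * q.1 + β) * Dy (Dy u) q)) := by
    filter_upwards [hU.mem_nhds hpU] with q hq
    exact key q hq
  have hDxM : Dx (fun q =>
      Dy (fun s => Dx (Dy u) s
          - 1 / (s.2 + α * s.1 + β) * (Dx u s + α * Dy u s)) q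
        + 1 / (q.2 + α * q.1 + β) *
          (Dx (Dy u) q - 1 / (q.2 + α * q.1 + β) * (Dx u q + α * Dy u q))) p
      = Dx (fun q => Dx (Dy (Dy u)) q - α * (1 / (q.2 + α * q.1 + β) * Dy (Dy u) q)) p := by
    rw [Dx_eq, Dx_eq, hev.fderiv_eq]
  -- Step 3: compute the derivative of the simplified function
  have e3 : Dx (fun q => Dx (Dy (Dy u)) q - α * (1 / (q.2 + α * q.1 + β) * Dy (Dy u) q)) p
      = Dx (Dx (Dy (Dy u))) p
        - α * (-(0 + α * 1) / (p.2 + α * p.1 + β) ^ 2 * Dy (Dy u) p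
            + 1 / (p.2 + α * p.1 + β) * Dx (Dy (Dy u)) p) := by
    have dmul : DifferentiableAt ℝ (fun q => 1 / (q.2 + α * q.1 + β) * Dy (Dy u) q) p :=
      (diff_invw α β hp).mul (dd hDyDyu hpU)
    rw [Dx_eq, fd_sub (dd hDxDyDyu hpU) (dmul.const_mul α),
      fd_const_mul α dmul, fd_mul (diff_invw α β hp) (dd hDyDyu hpU), fd_invw α β hp]
    rfl
  rw [hDxM, e3, key p hpU]
  field_simp
  ring
end

section
/- Let α, β ∈ ℝ with α ≠ 0 and β ≠ 0, let w(x,y) = y + αx + β, and let U = {(x,y) ∈ ℝ² : w(x,y) ≠ 0}. Then the first two factors of the family factorization of D_x²D_y² commute: (D_x + α/w) ∘ (D_y + 1/w) = (D_y + 1/w) ∘ (D_x + α/w) as operators on smooth functions on U. -/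
/-- With `w = y + αx + β` and on `U = {w ≠ 0}`, the first two factors of the family
factorization of `D_x²D_y²` commute:
`(D_x + α/w) ∘ (D_y + 1/w) = (D_y + 1/w) ∘ (D_x + α/w)`. -/
theorem first_two_factors_commute
    (α β : ℝ) (hα : α ≠ 0) (hβ : β ≠ 0) :
    ∀ u : ℝ × ℝ → ℝ,
      ContDiffOn ℝ (⊤ : ℕ∞) u {p : ℝ × ℝ | p.2 + α * p.1 + β ≠ 0} →
      ∀ p : ℝ × ℝ, p.2 + α * p.1 + β ≠ 0 →
        (Dx (fun q => Dy u q + (1 / (q.2 + α * q.1 + β)) * u q) p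
          + (α / (p.2 + α * p.1 + β)) * (Dy u p + (1 / (p.2 + α * p.1 + β)) * u p))
        =
        (Dy (fun q => Dx u q + (α / (q.2 + α * q.1 + β)) * u q) p
          + (1 / (p.2 + α * p.1 + β)) * (Dx u p + (α / (p.2 + α * p.1 + β)) * u p)) := by
  intro u hu p hp
  have hs : IsOpen {p : ℝ × ℝ | p.2 + α * p.1 + β ≠ 0} := by
    have hc : Continuous fun p : ℝ × ℝ => p.2 + α * p.1 + β := by continuity
    exact isOpen_ne_fun hc continuous_const
  have hmem : {p : ℝ × ℝ | p.2 + α * p.1 + β ≠ 0} ∈ nhds p := hs.mem_nhds hp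
  have hcp : ContDiffAt ℝ (⊤ : ℕ∞) u p := hu.contDiffAt hmem
  -- derivative of w
  set Lw : (ℝ × ℝ) →L[ℝ] ℝ :=
    ContinuousLinearMap.snd ℝ ℝ ℝ + α • ContinuousLinearMap.fst ℝ ℝ ℝ with hLw
  have hwd : HasFDerivAt (fun q : ℝ × ℝ => q.2 + α * q.1 + β) Lw p := by
    exact ((hasFDerivAt_snd).add ((hasFDerivAt_fst).const_mul α)).add_const β
  have hud : HasFDerivAt u (fderiv ℝ u p) p :=
    (hcp.differentiableAt (by simp)).hasFDerivAt
  set f2 := fderiv ℝ (fderiv ℝ u) p with hf2def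
  have hcd : ContDiffAt ℝ 1 (fderiv ℝ u) p := hcp.fderiv_right (WithTop.coe_le_coe.mpr le_top)
  have hf2 : HasFDerivAt (fderiv ℝ u) f2 p := (hcd.differentiableAt one_ne_zero).hasFDerivAt
  -- symmetry of second derivative
  have hsymm : ∀ v w : ℝ × ℝ, f2 v w = f2 w v := by
    apply second_derivative_symmetric_of_eventually (f := u) ?_ hf2
    filter_upwards [hmem] with q hq
    exact ((hu.contDiffAt (hs.mem_nhds hq)).differentiableAt (by simp)).hasFDerivAt
  -- directional second derivatives
  have hdir : ∀ v : ℝ × ℝ, HasFDerivAt (fun q => fderiv ℝ u q v)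
      ((ContinuousLinearMap.apply ℝ ℝ v).comp f2) p := fun v =>
    ((ContinuousLinearMap.apply ℝ ℝ v).hasFDerivAt).comp p hf2
  have hinv : HasFDerivAt (fun q : ℝ × ℝ => (q.2 + α * q.1 + β)⁻¹)
      ((-((p.2 + α * p.1 + β) ^ 2)⁻¹) • Lw) p :=
    (hasDerivAt_inv hp).comp_hasFDerivAt p hwd
  have hfun1 : (fun q : ℝ × ℝ => Dy u q + (1 / (q.2 + α * q.1 + β)) * u q)
      = fun q => fderiv ℝ u q (0, 1) + (q.2 + α * q.1 + β)⁻¹ * u q := by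
    funext q; rw [one_div]; rfl
  have hfun2 : (fun q : ℝ × ℝ => Dx u q + (α / (q.2 + α * q.1 + β)) * u q)
      = fun q => fderiv ℝ u q (1, 0) + α * (q.2 + α * q.1 + β)⁻¹ * u q := by
    funext q; rw [div_eq_mul_inv]; rfl
  have hg1 : HasFDerivAt (fun q : ℝ × ℝ => fderiv ℝ u q (0, 1) + (q.2 + α * q.1 + β)⁻¹ * u q) _ p := (hdir (0, 1)).add (hinv.mul hud)
  have hg2 : HasFDerivAt (fun q : ℝ × ℝ => fderiv ℝ u q (1, 0) + α * (q.2 + α * q.1 + β)⁻¹ * u q) _ p := (hdir (1, 0)).add ((hinv.const_mul α).mul hud)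
  have e1 : Dx (fun q => Dy u q + (1 / (q.2 + α * q.1 + β)) * u q) p
      = f2 (1, 0) (0, 1) + (1 / (p.2 + α * p.1 + β)) * fderiv ℝ u p (1, 0)
        + u p * (-((p.2 + α * p.1 + β) ^ 2)⁻¹ * α) := by
    rw [Dx, hfun1, hg1.fderiv]
    simp [Lw, ContinuousLinearMap.add_apply, ContinuousLinearMap.comp_apply,
      ContinuousLinearMap.smul_apply, ContinuousLinearMap.apply_apply, smul_eq_mul, one_div]
    ring
  have e2 : Dy (fun q => Dx u q + (α / (q.2 + α * q.1 + β)) * u q) p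
      = f2 (0, 1) (1, 0) + (α / (p.2 + α * p.1 + β)) * fderiv ℝ u p (0, 1)
        + u p * (α * (-((p.2 + α * p.1 + β) ^ 2)⁻¹)) := by
    rw [Dy, hfun2, hg2.fderiv]
    simp [Lw, ContinuousLinearMap.add_apply, ContinuousLinearMap.comp_apply,
      ContinuousLinearMap.smul_apply, ContinuousLinearMap.apply_apply, smul_eq_mul, div_eq_mul_inv]
    ring
  rw [e1, e2, hsymm (1, 0) (0, 1)]
  show _ + _ * (Dy u p + _) = _ + _ * (Dx u p + _)
  simp only [Dx, Dy]
  ring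
end

section
/- Let A₄ = D_x²D_y² + D_x + D_y + 1. If l₁₀, l₀₁, l₀₀, f₁₀, f₀₁, f₀₀, p, q, r : ℝ² → ℝ are smooth functions such that A₄ = (D_x² + l₁₀D_x + l₀₁D_y + l₀₀) ∘ (D_y² + f₁₀D_x + f₀₁D_y + f₀₀) + pD_x + qD_y + r as operators on smooth functions, then l₁₀ = l₀₁ = l₀₀ = f₁₀ = f₀₁ = f₀₀ = 0 and p = q = r = 1; that is, A₄ has a unique incomplete factorization of factorization type (X²)(Y²) with remainder of order at most one, and the unique common obstacle is D_x + D_y + 1. -/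
private lemma diff_Dx' {f : ℝ×ℝ→ℝ} (hf : ContDiff ℝ (⊤ : ℕ∞) f) : Differentiable ℝ (Dx f) := by
  have h : ContDiff ℝ (⊤ : ℕ∞) (fun p => fderiv ℝ f p) := hf.fderiv_right (by simp)
  exact (h.clm_apply contDiff_const).differentiable (by simp)

private lemma diff_Dy' {f : ℝ×ℝ→ℝ} (hf : ContDiff ℝ (⊤ : ℕ∞) f) : Differentiable ℝ (Dy f) := by
  have h : ContDiff ℝ (⊤ : ℕ∞) (fun p => fderiv ℝ f p) := hf.fderiv_right (by simp)
  exact (h.clm_apply contDiff_const).differentiable (by simp)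

private lemma Dx_add' {A B : ℝ×ℝ→ℝ} (hA : Differentiable ℝ A) (hB : Differentiable ℝ B) :
    Dx (fun w => A w + B w) = fun z => Dx A z + Dx B z := by
  funext z; simp only [Dx]; rw [fderiv_fun_add (hA z) (hB z)]; simp

private lemma Dy_add' {A B : ℝ×ℝ→ℝ} (hA : Differentiable ℝ A) (hB : Differentiable ℝ B) :
    Dy (fun w => A w + B w) = fun z => Dy A z + Dy B z := by
  funext z; simp only [Dy]; rw [fderiv_fun_add (hA z) (hB z)]; simp

private lemma Dx_mul' {A B : ℝ×ℝ→ℝ} (hA : Differentiable ℝ A) (hB : Differentiable ℝ B) :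
    Dx (fun w => A w * B w) = fun z => Dx A z * B z + A z * Dx B z := by
  funext z; simp only [Dx]; rw [fderiv_fun_mul (hA z) (hB z)]; simp; ring

private lemma Dy_mul' {A B : ℝ×ℝ→ℝ} (hA : Differentiable ℝ A) (hB : Differentiable ℝ B) :
    Dy (fun w => A w * B w) = fun z => Dy A z * B z + A z * Dy B z := by
  funext z; simp only [Dy]; rw [fderiv_fun_mul (hA z) (hB z)]; simp; ring

private lemma Dx_const' (c : ℝ) : Dx (fun _ => c) = fun _ => 0 := by funext z; simp [Dx]
private lemma Dy_const' (c : ℝ) : Dy (fun _ => c) = fun _ => 0 := by funext z; simp [Dy]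

private lemma Dx_fst_sub' (c : ℝ) : Dx (fun z : ℝ×ℝ => z.1 - c) = fun _ => 1 := by
  funext z; simp only [Dx]; rw [((hasFDerivAt_fst (p := z)).sub_const c).fderiv]; simp
private lemma Dy_fst_sub' (c : ℝ) : Dy (fun z : ℝ×ℝ => z.1 - c) = fun _ => 0 := by
  funext z; simp only [Dy]; rw [((hasFDerivAt_fst (p := z)).sub_const c).fderiv]; simp
private lemma Dx_snd_sub' (c : ℝ) : Dx (fun z : ℝ×ℝ => z.2 - c) = fun _ => 0 := by
  funext z; simp only [Dx]; rw [((hasFDerivAt_snd (p := z)).sub_const c).fderiv]; simp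
private lemma Dy_snd_sub' (c : ℝ) : Dy (fun z : ℝ×ℝ => z.2 - c) = fun _ => 1 := by
  funext z; simp only [Dy]; rw [((hasFDerivAt_snd (p := z)).sub_const c).fderiv]; simp

/-- For `A₄ = D_x²D_y² + D_x + D_y + 1`, any incomplete factorization
`A₄ = (D_x² + l₁₀D_x + l₀₁D_y + l₀₀) ∘ (D_y² + f₁₀D_x + f₀₁D_y + f₀₀) + pD_x + qD_y + r`
of type `(X²)(Y²)` with remainder of order at most one forces
`l₁₀ = l₀₁ = l₀₀ = f₁₀ = f₀₁ = f₀₀ = 0` and `p = q = r = 1`; in particular the common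
obstacle `D_x + D_y + 1` is unique. -/
theorem unique_obstacle_type_X2_Y2
    (l₁₀ l₀₁ l₀₀ f₁₀ f₀₁ f₀₀ p q r : ℝ × ℝ → ℝ)
    (hl₁₀ : ContDiff ℝ (⊤ : ℕ∞) l₁₀) (hl₀₁ : ContDiff ℝ (⊤ : ℕ∞) l₀₁) (hl₀₀ : ContDiff ℝ (⊤ : ℕ∞) l₀₀)
    (hf₁₀ : ContDiff ℝ (⊤ : ℕ∞) f₁₀) (hf₀₁ : ContDiff ℝ (⊤ : ℕ∞) f₀₁) (hf₀₀ : ContDiff ℝ (⊤ : ℕ∞) f₀₀)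
    (hp : ContDiff ℝ (⊤ : ℕ∞) p) (hq : ContDiff ℝ (⊤ : ℕ∞) q) (hr : ContDiff ℝ (⊤ : ℕ∞) r)
    (heq : ∀ u : ℝ × ℝ → ℝ, ContDiff ℝ (⊤ : ℕ∞) u → ∀ pt : ℝ × ℝ,
      Dx (Dx (Dy (Dy u))) pt + Dx u pt + Dy u pt + u pt
        =
      (Dx (Dx (fun q' => Dy (Dy u) q' + f₁₀ q' * Dx u q' + f₀₁ q' * Dy u q'
            + f₀₀ q' * u q')) pt
        + l₁₀ pt * Dx (fun q' => Dy (Dy u) q' + f₁₀ q' * Dx u q' + f₀₁ q' * Dy u q'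
            + f₀₀ q' * u q') pt
        + l₀₁ pt * Dy (fun q' => Dy (Dy u) q' + f₁₀ q' * Dx u q' + f₀₁ q' * Dy u q'
            + f₀₀ q' * u q') pt
        + l₀₀ pt * (Dy (Dy u) pt + f₁₀ pt * Dx u pt + f₀₁ pt * Dy u pt
            + f₀₀ pt * u pt))
        + p pt * Dx u pt + q pt * Dy u pt + r pt * u pt) :
    (∀ pt : ℝ × ℝ, l₁₀ pt = 0) ∧ (∀ pt : ℝ × ℝ, l₀₁ pt = 0) ∧
    (∀ pt : ℝ × ℝ, l₀₀ pt = 0) ∧ (∀ pt : ℝ × ℝ, f₁₀ pt = 0) ∧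
    (∀ pt : ℝ × ℝ, f₀₁ pt = 0) ∧ (∀ pt : ℝ × ℝ, f₀₀ pt = 0) ∧
    (∀ pt : ℝ × ℝ, p pt = 1) ∧ (∀ pt : ℝ × ℝ, q pt = 1) ∧ (∀ pt : ℝ × ℝ, r pt = 1) := by
  have df₁₀ := hf₁₀.differentiable (by simp)
  have df₀₁ := hf₀₁.differentiable (by simp)
  have df₀₀ := hf₀₀.differentiable (by simp)
  have hdf₁₀ := diff_Dx' hf₁₀
  have hdf₀₁ := diff_Dx' hf₀₁
  have hdf₀₀ := diff_Dx' hf₀₀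
  have hdf₁₀' := diff_Dy' hf₁₀
  have hdf₀₁' := diff_Dy' hf₀₁
  have hdf₀₀' := diff_Dy' hf₀₀
  -- Step 1 : f₁₀ = 0, via u = (x-a)³
  have hF10 : f₁₀ = fun _ => 0 := by
    funext pt
    obtain ⟨a, b⟩ := pt
    have hu : ContDiff ℝ (⊤ : ℕ∞) (fun z : ℝ×ℝ => (z.1 - a) * ((z.1 - a) * (z.1 - a))) := by fun_prop
    have E := heq _ hu (a, b)
    simp (disch := fun_prop) only [Dx_add', Dy_add', Dx_mul', Dy_mul', Dx_const', Dy_const',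
      Dx_fst_sub', Dy_fst_sub', Dx_snd_sub', Dy_snd_sub',
      sub_self, mul_zero, zero_mul, add_zero, zero_add, mul_one, one_mul] at E
    linarith
  subst hF10
  simp only [zero_mul, add_zero] at heq
  -- Step 2 : l₀₁ = 0, via u = (y-b)³
  have hL01 : l₀₁ = fun _ => 0 := by
    funext pt
    obtain ⟨a, b⟩ := pt
    have hu : ContDiff ℝ (⊤ : ℕ∞) (fun z : ℝ×ℝ => (z.2 - b) * ((z.2 - b) * (z.2 - b))) := by fun_prop
    have E := heq _ hu (a, b)
    simp (disch := fun_prop) only [Dx_add', Dy_add', Dx_mul', Dy_mul', Dx_const', Dy_const',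
      Dx_fst_sub', Dy_fst_sub', Dx_snd_sub', Dy_snd_sub',
      sub_self, mul_zero, zero_mul, add_zero, zero_add, mul_one, one_mul] at E
    linarith
  subst hL01
  simp only [zero_mul, add_zero] at heq
  -- Step 3 : l₁₀ = 0, via u = (x-a)(y-b)²
  have hL10 : l₁₀ = fun _ => 0 := by
    funext pt
    obtain ⟨a, b⟩ := pt
    have hu : ContDiff ℝ (⊤ : ℕ∞) (fun z : ℝ×ℝ => (z.1 - a) * ((z.2 - b) * (z.2 - b))) := by fun_prop
    have E := heq _ hu (a, b)
    simp (disch := fun_prop) only [Dx_add', Dy_add', Dx_mul', Dy_mul', Dx_const', Dy_const',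
      Dx_fst_sub', Dy_fst_sub', Dx_snd_sub', Dy_snd_sub',
      sub_self, mul_zero, zero_mul, add_zero, zero_add, mul_one, one_mul] at E
    linarith
  subst hL10
  simp only [zero_mul, add_zero, zero_add] at heq
  -- Step 4 : f₀₁ = 0, via u = (x-a)²(y-b)
  have hF01 : f₀₁ = fun _ => 0 := by
    funext pt
    obtain ⟨a, b⟩ := pt
    have hu : ContDiff ℝ (⊤ : ℕ∞) (fun z : ℝ×ℝ => (z.1 - a) * ((z.1 - a) * (z.2 - b))) := by fun_prop
    have E := heq _ hu (a, b)
    simp (disch := fun_prop) only [Dx_add', Dy_add', Dx_mul', Dy_mul', Dx_const', Dy_const',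
      Dx_fst_sub', Dy_fst_sub', Dx_snd_sub', Dy_snd_sub',
      sub_self, mul_zero, zero_mul, add_zero, zero_add, mul_one, one_mul] at E
    linarith
  subst hF01
  simp only [zero_mul, add_zero, zero_add] at heq
  -- Step 5 : l₀₀ = 0, via u = (y-b)²
  have hL00 : l₀₀ = fun _ => 0 := by
    funext pt
    obtain ⟨a, b⟩ := pt
    have hu : ContDiff ℝ (⊤ : ℕ∞) (fun z : ℝ×ℝ => (z.2 - b) * (z.2 - b)) := by fun_prop
    have E := heq _ hu (a, b)
    simp (disch := fun_prop) only [Dx_add', Dy_add', Dx_mul', Dy_mul', Dx_const', Dy_const',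
      Dx_fst_sub', Dy_fst_sub', Dx_snd_sub', Dy_snd_sub',
      sub_self, mul_zero, zero_mul, add_zero, zero_add, mul_one, one_mul] at E
    linarith
  subst hL00
  simp only [zero_mul, add_zero, zero_add] at heq
  -- Step 6 : f₀₀ = 0, via u = (x-a)²
  have hF00 : f₀₀ = fun _ => 0 := by
    funext pt
    obtain ⟨a, b⟩ := pt
    have hu : ContDiff ℝ (⊤ : ℕ∞) (fun z : ℝ×ℝ => (z.1 - a) * (z.1 - a)) := by fun_prop
    have E := heq _ hu (a, b)
    simp (disch := fun_prop) only [Dx_add', Dy_add', Dx_mul', Dy_mul', Dx_const', Dy_const',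
      Dx_fst_sub', Dy_fst_sub', Dx_snd_sub', Dy_snd_sub',
      sub_self, mul_zero, zero_mul, add_zero, zero_add, mul_one, one_mul] at E
    linarith
  subst hF00
  simp only [zero_mul, add_zero, zero_add] at heq
  -- Step 7 : p = 1, via u = x-a
  have hP : p = fun _ => 1 := by
    funext pt
    obtain ⟨a, b⟩ := pt
    have hu : ContDiff ℝ (⊤ : ℕ∞) (fun z : ℝ×ℝ => z.1 - a) := by fun_prop
    have E := heq _ hu (a, b)
    simp (disch := fun_prop) only [Dx_add', Dy_add', Dx_mul', Dy_mul', Dx_const', Dy_const',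
      Dx_fst_sub', Dy_fst_sub', Dx_snd_sub', Dy_snd_sub',
      sub_self, mul_zero, zero_mul, add_zero, zero_add, mul_one, one_mul] at E
    linarith
  subst hP
  -- Step 8 : q = 1, via u = y-b
  have hQ : q = fun _ => 1 := by
    funext pt
    obtain ⟨a, b⟩ := pt
    have hu : ContDiff ℝ (⊤ : ℕ∞) (fun z : ℝ×ℝ => z.2 - b) := by fun_prop
    have E := heq _ hu (a, b)
    simp (disch := fun_prop) only [Dx_add', Dy_add', Dx_mul', Dy_mul', Dx_const', Dy_const',
      Dx_fst_sub', Dy_fst_sub', Dx_snd_sub', Dy_snd_sub',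
      sub_self, mul_zero, zero_mul, add_zero, zero_add, mul_one, one_mul] at E
    linarith
  subst hQ
  -- Step 9 : r = 1, via u = 1
  have hR : r = fun _ => 1 := by
    funext pt
    have hu : ContDiff ℝ (⊤ : ℕ∞) (fun _ : ℝ×ℝ => (1:ℝ)) := by fun_prop
    have E := heq _ hu pt
    simp (disch := fun_prop) only [Dx_add', Dy_add', Dx_mul', Dy_mul', Dx_const', Dy_const',
      sub_self, mul_zero, zero_mul, add_zero, zero_add, mul_one, one_mul] at E
    linarith
  subst hR
  refine ⟨fun _ => rfl, fun _ => rfl, fun _ => rfl, fun _ => rfl, fun _ => rfl,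
    fun _ => rfl, fun _ => rfl, fun _ => rfl, fun _ => rfl⟩
end

section
/- Let A₄ = D_x²D_y² + D_x + D_y + 1, and let m, g : ℝ² → ℝ be smooth functions with m² + m_x = 0. Then A₄ = (D_x + m) ∘ (D_xD_y² − mD_y² + g) + (1 − g)D_x + D_y + (1 − mg − g_x) as operators on smooth functions; in particular A₄ has an infinite family (parametrized by the free function g) of incomplete factorizations of factorization type (X)(XY²) with first-order remainders. -/
lemma contDiff_Dx {u : ℝ × ℝ → ℝ} (hu : ContDiff ℝ (⊤ : ℕ∞) u) : ContDiff ℝ (⊤ : ℕ∞) (Dx u) :=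
  (hu.fderiv_right (le_refl _)).clm_apply contDiff_const

lemma contDiff_Dy {u : ℝ × ℝ → ℝ} (hu : ContDiff ℝ (⊤ : ℕ∞) u) : ContDiff ℝ (⊤ : ℕ∞) (Dy u) :=
  (hu.fderiv_right (le_refl _)).clm_apply contDiff_const

lemma Dx_add {u v : ℝ × ℝ → ℝ} (hu : ContDiff ℝ (⊤ : ℕ∞) u) (hv : ContDiff ℝ (⊤ : ℕ∞) v) (p : ℝ × ℝ) :
    Dx (fun q => u q + v q) p = Dx u p + Dx v p := by
  simp [Dx, fderiv_fun_add (hu.differentiable (by simp) p) (hv.differentiable (by simp) p)]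

lemma Dx_sub {u v : ℝ × ℝ → ℝ} (hu : ContDiff ℝ (⊤ : ℕ∞) u) (hv : ContDiff ℝ (⊤ : ℕ∞) v) (p : ℝ × ℝ) :
    Dx (fun q => u q - v q) p = Dx u p - Dx v p := by
  simp [Dx, fderiv_fun_sub (hu.differentiable (by simp) p) (hv.differentiable (by simp) p)]

lemma Dx_mul {u v : ℝ × ℝ → ℝ} (hu : ContDiff ℝ (⊤ : ℕ∞) u) (hv : ContDiff ℝ (⊤ : ℕ∞) v) (p : ℝ × ℝ) :
    Dx (fun q => u q * v q) p = u p * Dx v p + Dx u p * v p := by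
  simp [Dx, fderiv_fun_mul (hu.differentiable (by simp) p) (hv.differentiable (by simp) p), mul_comm]

/-- For `A₄ = D_x²D_y² + D_x + D_y + 1` and any smooth `m, g` with `m² + m_x = 0`,
`A₄ = (D_x + m) ∘ (D_xD_y² − mD_y² + g) + (1 − g)D_x + D_y + (1 − mg − g_x)`:
an infinite family of incomplete factorizations of type `(X)(XY²)` parametrized by `g`. -/
theorem infinite_family_of_incomplete_factorizations
    (m g : ℝ × ℝ → ℝ) (hm : ContDiff ℝ (⊤ : ℕ∞) m) (hg : ContDiff ℝ (⊤ : ℕ∞) g)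
    (hm_eq : ∀ p : ℝ × ℝ, m p ^ 2 + Dx m p = 0) :
    ∀ u : ℝ × ℝ → ℝ, ContDiff ℝ (⊤ : ℕ∞) u → ∀ p : ℝ × ℝ,
      Dx (Dx (Dy (Dy u))) p + Dx u p + Dy u p + u p
        =
      (Dx (fun q => Dx (Dy (Dy u)) q - m q * Dy (Dy u) q + g q * u q) p
        + m p * (Dx (Dy (Dy u)) p - m p * Dy (Dy u) p + g p * u p))
        + (1 - g p) * Dx u p + Dy u p + (1 - m p * g p - Dx g p) * u p := by
  intro u hu p
  have h2 : ContDiff ℝ (⊤ : ℕ∞) (Dy (Dy u)) := contDiff_Dy (contDiff_Dy hu)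
  have h3 : ContDiff ℝ (⊤ : ℕ∞) (Dx (Dy (Dy u))) := contDiff_Dx h2
  rw [Dx_add (h3.sub (hm.mul h2)) (hg.mul hu) p,
      Dx_sub h3 (hm.mul h2) p, Dx_mul hm h2 p, Dx_mul hg hu p]
  linear_combination (Dy (Dy u) p) * hm_eq p
end
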